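/- arXiv:1207.6524 — 12 statements merged into one kernel-verified Lean document; each statement's English description precedes it below -/
import Mathlib

section
/- Let N ≥ 1 and k ≥ 1 be natural numbers. Let E be the real N×N matrix indexed by ZMod N with E s r = 1 if r = s + 1 and E s r = 0 otherwise (the cyclic shift permutation matrix), and let A = Σ_{j=0}^{k−1} E^j (so each row of A has k cyclically consecutive entries equal to 1). Then A is invertible if and only if N and k are coprime. -/
open Matrix Finset

variable {N : ℕ} [NeZero N]

private lemma Epow (j : ℕ) :
    (Matrix.of fun s r : ZMod N => if r = s + 1 then (1 : ℝ) else 0) ^ j =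
      Matrix.of (fun s r : ZMod N => if r = s + (j : ZMod N) then (1 : ℝ) else 0) := by
  induction j with
  | zero =>
      ext s r
      simp [Matrix.one_apply, eq_comm]
  | succ j ih =>
      ext s r
      rw [pow_succ, ih]
      simp only [Matrix.mul_apply, Matrix.of_apply]
      rw [Finset.sum_eq_single (s + (j : ZMod N))]
      · push_cast
        by_cases h : r = s + j + 1 <;> simp [h, add_assoc]
      · intro b _ hb
        simp [hb]
      · simp

private lemma mulVec_sum (k : ℕ) (v : ZMod N → ℝ) (s : ZMod N) :
    ((∑ j ∈ Finset.range k,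
      (Matrix.of fun s r : ZMod N => if r = s + 1 then (1 : ℝ) else 0) ^ j).mulVec v) s =
      ∑ j ∈ Finset.range k, v (s + (j : ZMod N)) := by
  simp only [Matrix.mulVec, dotProduct, Matrix.sum_apply, Epow, Matrix.of_apply,
    Finset.sum_mul]
  rw [Finset.sum_comm]
  refine Finset.sum_congr rfl fun j _ => ?_
  rw [Finset.sum_eq_single (s + (j : ZMod N))] <;> simp +contextual

private lemma sum_zmod_eq {d : ℕ} [NeZero d] (h : ZMod d → ℝ) :
    ∑ t : ZMod d, h t = ∑ i ∈ Finset.range d, h (i : ZMod d) := by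
  refine Finset.sum_bij' (fun t _ => (ZMod.val t)) (fun i _ => (i : ZMod d)) ?_ ?_ ?_ ?_ ?_
  · intro t _; simpa using ZMod.val_lt t
  · intro i _; simp
  · intro t _; simp [ZMod.natCast_zmod_val]
  · intro i hi; simp at hi
    show ((i : ZMod d)).val = i
    exact ZMod.val_cast_of_lt hi
  · intro t _; rw [ZMod.natCast_zmod_val]

private lemma sum_range_mul_periodic {d : ℕ} [NeZero d] (h : ZMod d → ℝ) (m : ℕ) :
    ∑ j ∈ Finset.range (m * d), h (j : ZMod d) = m * ∑ t : ZMod d, h t := by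
  induction m with
  | zero => simp
  | succ m ih =>
      have : (m + 1) * d = m * d + d := by ring
      rw [this, Finset.sum_range_add, ih]
      have : ∑ i ∈ Finset.range d, h ((m * d + i : ℕ) : ZMod d) =
          ∑ i ∈ Finset.range d, h (i : ZMod d) := by
        refine Finset.sum_congr rfl fun i _ => ?_
        congr 1
        push_cast
        simp
      rw [this, ← sum_zmod_eq]
      push_cast
      ring

/-- The matrix `A = ∑_{j=0}^{k-1} E^j`, where `E` is the cyclic shift
permutation matrix on `ZMod N` (with `E s r = 1` iff `r = s + 1`), is invertible
if and only if `N` and `k` are coprime. -/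
theorem stmt_0 (N k : ℕ) [NeZero N] (hk : 1 ≤ k) :
    IsUnit (∑ j ∈ Finset.range k,
      (Matrix.of fun s r : ZMod N => if r = s + 1 then (1 : ℝ) else 0) ^ j) ↔
    Nat.Coprime N k := by
  constructor
  · intro hu
    by_contra hcop
    set d := Nat.gcd N k with hd
    have hdN : d ∣ N := Nat.gcd_dvd_left N k
    have hdk : d ∣ k := Nat.gcd_dvd_right N k
    have hd0 : d ≠ 0 := Nat.gcd_ne_zero_left (NeZero.ne N)
    have hd1 : d ≠ 1 := fun h => hcop h
    have hd2 : 2 ≤ d := by omega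
    haveI : NeZero d := ⟨hd0⟩
    haveI : Fact (1 < d) := ⟨by omega⟩
    have h01 : (0 : ZMod d) ≠ 1 := zero_ne_one
    set g : ZMod d → ℝ := fun t => if t = 0 then 1 else if t = 1 then -1 else 0 with hg
    have hsum_g : ∑ t : ZMod d, g t = 0 := by
      have : ∀ t : ZMod d, g t = (if t = 0 then (1:ℝ) else 0) + (if t = 1 then (-1:ℝ) else 0) := by
        intro t
        by_cases h0 : t = 0
        · subst h0; simp [hg, h01]
        · by_cases h1 : t = 1 <;> simp [hg, h0, h1, one_ne_zero]
      simp only [this, Finset.sum_add_distrib, Finset.sum_ite_eq' Finset.univ,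
        Finset.mem_univ, if_true]
      ring
    set v : ZMod N → ℝ := fun s => g (ZMod.castHom hdN (ZMod d) s) with hv
    have hAv : ∀ s : ZMod N, ∑ j ∈ Finset.range k, v (s + (j : ZMod N)) = 0 := by
      intro s
      have hcast : ∀ j : ℕ, v (s + (j : ZMod N)) =
          g (ZMod.castHom hdN (ZMod d) s + (j : ZMod d)) := by
        intro j
        have : ZMod.castHom hdN (ZMod d) (s + (j : ZMod N)) =
            ZMod.castHom hdN (ZMod d) s + (j : ZMod d) := by
          rw [map_add, map_natCast]
        simp only [hv]
        rw [this]
      simp only [hcast]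
      obtain ⟨m, hm⟩ := hdk
      rw [hm, mul_comm d m]
      have key : ∑ j ∈ Finset.range (m * d),
          g (ZMod.castHom hdN (ZMod d) s + (j : ZMod d)) =
          m * ∑ t : ZMod d, g (ZMod.castHom hdN (ZMod d) s + t) :=
        sum_range_mul_periodic (fun t => g (ZMod.castHom hdN (ZMod d) s + t)) m
      rw [key]
      have : ∑ t : ZMod d, g (ZMod.castHom hdN (ZMod d) s + t) = ∑ t : ZMod d, g t :=
        Fintype.sum_equiv (Equiv.addLeft (ZMod.castHom hdN (ZMod d) s)) _ _ (fun t => rfl)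
      rw [this, hsum_g, mul_zero]
    have hinj := Matrix.mulVec_injective_iff_isUnit.mpr hu
    have hAv0 : (∑ j ∈ Finset.range k,
        (Matrix.of fun s r : ZMod N => if r = s + 1 then (1 : ℝ) else 0) ^ j).mulVec v = 0 := by
      funext s
      rw [_root_.mulVec_sum]
      exact hAv s
    have : v = 0 := by
      have := hinj (a₁ := v) (a₂ := 0) (by rw [hAv0, Matrix.mulVec_zero])
      exact this
    have hv0 : v 0 = 1 := by simp [hv, hg]
    rw [this] at hv0
    simp at hv0
  · intro hcop
    rw [← Matrix.mulVec_injective_iff_isUnit]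
    intro u w huw
    have hker : ∀ x : ZMod N → ℝ,
        (∑ j ∈ Finset.range k,
          (Matrix.of fun s r : ZMod N => if r = s + 1 then (1 : ℝ) else 0) ^ j).mulVec x = 0 →
        x = 0 := by
      intro x hx
      have H : ∀ s : ZMod N, ∑ j ∈ Finset.range k, x (s + (j : ZMod N)) = 0 := by
        intro s
        have := congrFun hx s
        rwa [_root_.mulVec_sum] at this
      -- periodicity: x (s + k) = x s
      have hper : ∀ s : ZMod N, x (s + (k : ZMod N)) = x s := by
        intro s
        obtain ⟨k', rfl⟩ : ∃ k', k = k' + 1 := ⟨k - 1, by omega⟩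
        have h1 := H s
        have h2 := H (s + 1)
        rw [Finset.sum_range_succ'] at h1
        rw [Finset.sum_range_succ] at h2
        have heq : ∀ j : ℕ, s + 1 + (j : ZMod N) = s + ((j + 1 : ℕ) : ZMod N) := by
          intro j; push_cast; ring
        simp only [heq] at h2
        have e1 : ∑ j ∈ Finset.range k', x (s + ((j + 1 : ℕ) : ZMod N)) +
            x (s + ((k' + 1 : ℕ) : ZMod N)) = 0 := by
          convert h2 using 3
        have e2 : ∑ j ∈ Finset.range k', x (s + ((j + 1 : ℕ) : ZMod N)) +
            x (s + ((0 : ℕ) : ZMod N)) = 0 := by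
          convert h1 using 3
        have : x (s + ((k' + 1 : ℕ) : ZMod N)) = x (s + ((0 : ℕ) : ZMod N)) := by linarith
        simpa using this
      -- x is constant
      have hconst : ∀ m : ℕ, x ((m : ZMod N) * (k : ZMod N)) = x 0 := by
        intro m
        induction m with
        | zero => simp
        | succ m ih =>
            have : ((m + 1 : ℕ) : ZMod N) * (k : ZMod N) =
                (m : ZMod N) * (k : ZMod N) + (k : ZMod N) := by push_cast; ring
            rw [this, hper, ih]
      have hconst' : ∀ s : ZMod N, x s = x 0 := by
        intro s
        have hkunit : IsUnit (k : ZMod N) :=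
          (ZMod.isUnit_iff_coprime k N).mpr (Nat.Coprime.symm hcop)
        obtain ⟨u', hu'⟩ := hkunit
        have : s = ((s * (↑u'⁻¹ : ZMod N)).val : ZMod N) * (k : ZMod N) := by
          rw [ZMod.natCast_zmod_val, ← hu', mul_assoc, Units.inv_mul, mul_one]
        rw [this, hconst]
      have hx0 : x 0 = 0 := by
        have := H 0
        simp only [hconst', zero_add] at this
        have : (k : ℝ) * x 0 = 0 := by
          rw [← this]
          simp [Finset.sum_const, hconst']
        have hk' : (k : ℝ) ≠ 0 := by positivity
        exact (mul_eq_zero.mp this).resolve_left hk'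
      funext s
      simp [hconst' s, hx0]
    have : u - w = 0 := by
      apply hker
      rw [Matrix.mulVec_sub, huw, sub_self]
    exact sub_eq_zero.mp this
end

section
/- Let n ≥ 1 and N ≥ 1 with N and n+1 coprime. For every f : ZMod N → ℝ with f_s > 0 for all s, there exists t : ZMod N → ℝ with t_s > 0 for all s such that ∏_{j=0}^{n} t_{s+j} = f_s for every s ∈ ZMod N. -/
/-- If `N` and `n+1` are coprime, every positive `f : ZMod N → ℝ`
can be written as `f s = ∏_{j=0}^{n} t (s+j)` for some positive `t`. -/
theorem stmt_3 (n N : ℕ) (hn : 1 ≤ n) (hN : 1 ≤ N) (hco : Nat.Coprime N (n + 1))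
    (f : ZMod N → ℝ) (hf : ∀ s, 0 < f s) :
    ∃ t : ZMod N → ℝ, (∀ s, 0 < t s) ∧
      ∀ s : ZMod N, (∏ j ∈ Finset.range (n + 1), t (s + (j : ZMod N))) = f s := by
  haveI : NeZero N := ⟨by omega⟩
  -- the linear operator
  set A : (ZMod N → ℝ) →ₗ[ℝ] (ZMod N → ℝ) :=
    { toFun := fun u s => ∑ j ∈ Finset.range (n + 1), u (s + (j : ZMod N))
      map_add' := by
        intro u v; funext s; simp [Finset.sum_add_distrib]
      map_smul' := by
        intro c u; funext s; simp [Finset.mul_sum] } with hA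
  have hAinj : Function.Injective A := by
    rw [← LinearMap.ker_eq_bot, LinearMap.ker_eq_bot']
    intro u hu
    have hu' : ∀ s : ZMod N, ∑ j ∈ Finset.range (n + 1), u (s + (j : ZMod N)) = 0 := by
      intro s; exact congrFun hu s
    -- shift invariance with step n+1
    have hshift : ∀ s : ZMod N, u (s + (n + 1 : ℕ)) = u s := by
      intro s
      have h1 := hu' s
      have h2 := hu' (s + 1)
      have e : ∑ j ∈ Finset.range (n + 1), u (s + 1 + (j : ZMod N))
          = ∑ j ∈ Finset.range (n + 1), u (s + ((j + 1 : ℕ) : ZMod N)) := by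
        apply Finset.sum_congr rfl
        intro j _
        push_cast
        ring_nf
      rw [e] at h2
      have h4 : ∑ j ∈ Finset.range (n + 2), u (s + (j : ZMod N))
          = ∑ j ∈ Finset.range (n + 1), u (s + ((j + 1 : ℕ) : ZMod N)) + u (s + ((0:ℕ) : ZMod N)) :=
        Finset.sum_range_succ' _ _
      have h5 : ∑ j ∈ Finset.range (n + 2), u (s + (j : ZMod N))
          = ∑ j ∈ Finset.range (n + 1), u (s + (j : ZMod N)) + u (s + ((n+1 : ℕ) : ZMod N)) :=
        Finset.sum_range_succ _ _
      rw [h2] at h4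
      rw [h1] at h5
      have h6 : u (s + ((n+1:ℕ):ZMod N)) = u (s + ((0:ℕ):ZMod N)) := by linarith
      simpa using h6
    -- iterate the shift
    have hiter : ∀ (k : ℕ) (s : ZMod N), u (s + (k : ZMod N) * ((n:ZMod N) + 1)) = u s := by
      intro k
      induction k with
      | zero => intro s; simp
      | succ m ih =>
        intro s
        have : s + ((m+1 : ℕ) : ZMod N) * ((n:ZMod N) + 1)
            = (s + (m : ZMod N) * ((n:ZMod N) + 1)) + ((n + 1 : ℕ) : ZMod N) := by
          push_cast; ring
        rw [this, hshift, ih]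
    -- u is constant
    have hconst : ∀ x : ZMod N, u x = u 0 := by
      intro x
      -- n+1 is a unit in ZMod N
      have hunit : IsUnit ((n : ZMod N) + 1) := by
        have : ((n + 1 : ℕ) : ZMod N) = (n : ZMod N) + 1 := by push_cast; ring
        rw [← this]
        exact (ZMod.isUnit_iff_coprime (n+1) N).2 (Nat.Coprime.symm hco)
      obtain ⟨v, hv⟩ := hunit
      obtain ⟨k, hk⟩ := ZMod.natCast_zmod_surjective (n := N) (x * (↑v⁻¹ : ZMod N))
      have hx : x = (k : ZMod N) * ((n : ZMod N) + 1) := by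
        rw [hk, ← hv, mul_assoc]
        simp
      calc u x = u (0 + (k : ZMod N) * ((n:ZMod N) + 1)) := by rw [zero_add, ← hx]
        _ = u 0 := hiter k 0
    have h0 := hu' 0
    have : ∑ j ∈ Finset.range (n + 1), u ((0:ZMod N) + (j : ZMod N))
        = (n + 1 : ℝ) * u 0 := by
      rw [Finset.sum_congr rfl (fun j _ => hconst _)]
      simp [mul_comm]
    rw [this] at h0
    have hu0 : u 0 = 0 := by
      have : (n + 1 : ℝ) ≠ 0 := by positivity
      exact (mul_eq_zero.1 h0).resolve_left this
    funext x
    simp [hconst x, hu0]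
  have hAsurj : Function.Surjective A :=
    LinearMap.injective_iff_surjective.mp hAinj
  obtain ⟨u, hu⟩ := hAsurj (fun s => Real.log (f s))
  refine ⟨fun s => Real.exp (u s), fun s => Real.exp_pos _, fun s => ?_⟩
  have : ∏ j ∈ Finset.range (n + 1), Real.exp (u (s + (j : ZMod N)))
      = Real.exp (∑ j ∈ Finset.range (n + 1), u (s + (j : ZMod N))) := by
    rw [Real.exp_sum]
  rw [this]
  have := congrFun hu s
  simp only [hA, LinearMap.coe_mk, AddHom.coe_mk] at this
  rw [this, Real.exp_log (hf s)]
end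

section
/- Let n ≥ 1 and N ≥ 1 with N and n+1 coprime. Let x : ZMod N → ℝ^n be such that for every s ∈ ZMod N the determinant of the (n+1)×(n+1) real matrix whose columns are the lifted vectors (x_{s+n}, 1), (x_{s+n−1}, 1), …, (x_{s+1}, 1), (x_s, 1) ∈ ℝ^{n+1} is strictly positive. Then there exists t : ZMod N → ℝ with t_s > 0 for all s such that for every s the determinant of the matrix with columns t_{s+n}(x_{s+n},1), …, t_{s+1}(x_{s+1},1), t_s(x_s,1) equals 1. -/
section aux

variable {N : ℕ} [NeZero N]

/-- The circulant "window sum" linear map. -/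
noncomputable def windowSum (n : ℕ) : (ZMod N → ℝ) →ₗ[ℝ] (ZMod N → ℝ) where
  toFun u := fun s => ∑ k ∈ Finset.range (n + 1), u (s + (k : ZMod N))
  map_add' u v := by funext s; simp [Finset.sum_add_distrib]
  map_smul' c u := by funext s; simp [Finset.mul_sum]

theorem windowSum_injective (n : ℕ) (hco : Nat.Coprime N (n + 1)) :
    Function.Injective (windowSum (N := N) n) := by
  rw [← LinearMap.ker_eq_bot, LinearMap.ker_eq_bot']
  intro u hu
  have hu' : ∀ s : ZMod N, ∑ k ∈ Finset.range (n + 1), u (s + (k : ZMod N)) = 0 := by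
    intro s; exact congrFun hu s
  -- periodicity with period n+1
  have hper : ∀ s : ZMod N, u (s + ((n + 1 : ℕ) : ZMod N)) = u s := by
    intro s
    have h1 : ∑ k ∈ Finset.range (n + 2), u (s + (k : ZMod N))
        = u (s + ((n + 1 : ℕ) : ZMod N)) := by
      rw [Finset.sum_range_succ, hu' s, zero_add]
    have h2 : ∑ k ∈ Finset.range (n + 2), u (s + (k : ZMod N)) = u s := by
      rw [Finset.sum_range_succ']
      have : ∑ k ∈ Finset.range (n + 1), u (s + ((k + 1 : ℕ) : ZMod N))
          = ∑ k ∈ Finset.range (n + 1), u ((s + 1) + (k : ZMod N)) := by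
        apply Finset.sum_congr rfl
        intro k _
        congr 1
        push_cast
        ring
      rw [this, hu' (s + 1)]
      simp
    rw [← h1, h2]
  have hmul : ∀ (m : ℕ) (s : ZMod N), u (s + (m : ℕ) * ((n + 1 : ℕ) : ZMod N)) = u s := by
    intro m
    induction m with
    | zero => simp
    | succ m ih =>
      intro s
      have : s + ((m + 1 : ℕ) : ZMod N) * ((n + 1 : ℕ) : ZMod N)
          = (s + ((n + 1 : ℕ) : ZMod N)) + (m : ℕ) * ((n + 1 : ℕ) : ZMod N) := by
        push_cast; ring
      rw [this, ih, hper]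
  -- u is constant
  have hunit : IsUnit ((n + 1 : ℕ) : ZMod N) := by
    rw [ZMod.isUnit_iff_coprime]
    exact (Nat.coprime_comm.mp hco)
  have hconst : ∀ a : ZMod N, u a = u 0 := by
    intro a
    obtain ⟨v, hv⟩ := hunit
    set m : ZMod N := ((v⁻¹ : (ZMod N)ˣ) : ZMod N) * a with hm
    have hma : m * ((n + 1 : ℕ) : ZMod N) = a := by
      rw [hm, ← hv, mul_comm, ← mul_assoc, Units.mul_inv, one_mul]
    have : a = 0 + (m.val : ℕ) * ((n + 1 : ℕ) : ZMod N) := by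
      rw [zero_add, ZMod.natCast_val, ZMod.cast_id, hma]
    rw [this, hmul]
  have h0 : (n + 1 : ℝ) * u 0 = 0 := by
    have := hu' 0
    calc (n + 1 : ℝ) * u 0 = ∑ k ∈ Finset.range (n + 1), u 0 := by
          simp [mul_comm]
      _ = ∑ k ∈ Finset.range (n + 1), u ((0 : ZMod N) + (k : ZMod N)) := by
          apply Finset.sum_congr rfl; intro k _; exact (hconst _).symm
      _ = 0 := hu' 0
  have hu0 : u 0 = 0 := by
    have : (n + 1 : ℝ) ≠ 0 := by positivity
    exact (mul_eq_zero.mp h0).resolve_left this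
  funext a
  rw [hconst a, hu0]; rfl

end aux

/-- Normalization of the lift of a nondegenerate twisted polygon in `ℝP^n`:
if all the determinants of the lifted vertex matrices are positive and `N` and `n+1`
are coprime, the scales `t` can be chosen positive with all determinants equal to `1`. -/
theorem stmt_4 (n N : ℕ) (hn : 1 ≤ n) (hN : 1 ≤ N) (hco : Nat.Coprime N (n + 1))
    (x : ZMod N → Fin n → ℝ)
    (hx : ∀ s : ZMod N,
      0 < (Matrix.of fun i j : Fin (n + 1) =>
        (Fin.snoc (x (s + ((n - (j : ℕ) : ℕ) : ZMod N))) (1 : ℝ) : Fin (n + 1) → ℝ) i).det) :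
    ∃ t : ZMod N → ℝ, (∀ s, 0 < t s) ∧
      ∀ s : ZMod N,
        (Matrix.of fun i j : Fin (n + 1) =>
          t (s + ((n - (j : ℕ) : ℕ) : ZMod N)) *
            (Fin.snoc (x (s + ((n - (j : ℕ) : ℕ) : ZMod N))) (1 : ℝ) : Fin (n + 1) → ℝ) i).det
          = 1 := by
  haveI : NeZero N := ⟨by omega⟩
  set D : ZMod N → ℝ := fun s =>
    (Matrix.of fun i j : Fin (n + 1) =>
      (Fin.snoc (x (s + ((n - (j : ℕ) : ℕ) : ZMod N))) (1 : ℝ) : Fin (n + 1) → ℝ) i).det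
    with hD
  have hsurj : Function.Surjective (windowSum (N := N) n) :=
    LinearMap.injective_iff_surjective.mp (windowSum_injective n hco)
  obtain ⟨u, hu⟩ := hsurj (fun s => -Real.log (D s))
  refine ⟨fun s => Real.exp (u s), fun s => Real.exp_pos _, ?_⟩
  intro s
  have hwin : ∑ k ∈ Finset.range (n + 1), u (s + (k : ZMod N)) = -Real.log (D s) :=
    congrFun hu s
  have hprod : ∏ k ∈ Finset.range (n + 1), Real.exp (u (s + (k : ZMod N))) = (D s)⁻¹ := by
    rw [← Real.exp_sum, hwin, Real.exp_neg, Real.exp_log (hx s)]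
  refine (Matrix.det_mul_row (fun j : Fin (n + 1) => Real.exp (u (s + ((n - (j : ℕ) : ℕ) : ZMod N))))
    (Matrix.of fun i j : Fin (n + 1) =>
      (Fin.snoc (x (s + ((n - (j : ℕ) : ℕ) : ZMod N))) (1 : ℝ) : Fin (n + 1) → ℝ) i)).trans ?_
  beta_reduce
  have hreindex : (∏ j : Fin (n + 1), Real.exp (u (s + ((n - (j : ℕ) : ℕ) : ZMod N))))
      = ∏ k ∈ Finset.range (n + 1), Real.exp (u (s + (k : ZMod N))) := by
    rw [← Fin.prod_univ_eq_prod_range (fun k => Real.exp (u (s + (k : ZMod N)))) (n + 1)]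
    rw [← Equiv.prod_comp (Fin.revPerm) (fun k : Fin (n + 1) => Real.exp (u (s + ((k : ℕ) : ZMod N))))]
    apply Finset.prod_congr rfl
    intro j _
    congr 2
    simp [Fin.revPerm, Fin.val_rev]
  rw [hreindex, hprod]
  exact inv_mul_cancel₀ (ne_of_gt (hx s))
end

section
/- Let n ≥ 1 and N ≥ 1. The linear map L on maps ZMod N → ℝ defined by (Lx)_s = x_{s+1} + x_s + x_{s−1} + ⋯ + x_{s−(n−1)} (that is, L = 𝒯 + 1 + 𝒯^{-1} + ⋯ + 𝒯^{-(n−1)}, a sum of n+1 consecutive shifts) is bijective if and only if N and n+1 are coprime. -/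
open Finset

private lemma sum_range_cast' {d : ℕ} [NeZero d] (g : ZMod d → ℝ) :
    ∑ j ∈ range d, g (j : ZMod d) = ∑ k : ZMod d, g k := by
  exact Finset.sum_nbij' (fun j => (j : ZMod d)) (fun z => z.val)
    (fun a _ => mem_univ _) (fun z _ => mem_range.mpr (ZMod.val_lt z))
    (fun j hj => ZMod.val_cast_of_lt (mem_range.mp hj))
    (fun z _ => ZMod.natCast_rightInverse z) (fun j _ => rfl)

private lemma sum_range_mul_cast' {d : ℕ} [NeZero d] (g : ZMod d → ℝ) (m : ℕ) :
    ∑ j ∈ range (d * m), g (j : ZMod d) = m * ∑ k : ZMod d, g k := by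
  induction m with
  | zero => simp
  | succ m ih =>
    rw [Nat.mul_succ, Finset.sum_range_add, ih]
    have : ∀ i : ℕ, ((d * m + i : ℕ) : ZMod d) = (i : ZMod d) := by
      intro i; push_cast; simp
    simp_rw [this]
    rw [sum_range_cast']
    push_cast; ring

private noncomputable def Lmap (n N : ℕ) : (ZMod N → ℝ) →ₗ[ℝ] (ZMod N → ℝ) where
  toFun x s := ∑ j ∈ range (n+1), x (s + 1 - (j : ZMod N))
  map_add' x y := by funext s; simp [Finset.sum_add_distrib]
  map_smul' c x := by funext s; simp [Finset.mul_sum]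

/-- The operator `𝒯 + 1 + 𝒯⁻¹ + ⋯ + 𝒯^{-(n-1)}` (a sum of `n+1`
consecutive shifts, `(Lx)_s = ∑_{j=0}^{n} x_{s+1-j}`) on maps `ZMod N → ℝ`
is bijective iff `N` and `n+1` are coprime. -/
theorem stmt_5 (n N : ℕ) (hn : 1 ≤ n) (hN : 1 ≤ N) :
    Function.Bijective (fun (x : ZMod N → ℝ) (s : ZMod N) =>
      ∑ j ∈ Finset.range (n + 1), x (s + 1 - (j : ZMod N)))
    ↔ Nat.Coprime N (n + 1) := by
  have : NeZero N := ⟨by omega⟩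
  have hfun : (fun (x : ZMod N → ℝ) (s : ZMod N) =>
      ∑ j ∈ Finset.range (n + 1), x (s + 1 - (j : ZMod N))) = ⇑(Lmap n N) := rfl
  rw [hfun]
  constructor
  · -- bijective → coprime
    intro h
    by_contra hcop
    set d := Nat.gcd N (n+1) with hd
    have hd0 : d ≠ 0 := by
      intro h0; have := Nat.eq_zero_of_gcd_eq_zero_left h0; omega
    have hd2 : 2 ≤ d := by
      have h1 : d ≠ 1 := fun h => hcop (by rw [Nat.Coprime, ← hd, h])
      omega
    have : NeZero d := ⟨hd0⟩
    have hdN : d ∣ N := Nat.gcd_dvd_left _ _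
    obtain ⟨m, hm⟩ : d ∣ n + 1 := Nat.gcd_dvd_right _ _
    set f : ZMod d → ℝ := fun k => (if k = 0 then (d : ℝ) else 0) - 1 with hf
    have hsumf : ∑ k : ZMod d, f k = 0 := by
      simp [hf, Finset.sum_sub_distrib, Finset.sum_ite_eq', ZMod.card]
    set x : ZMod N → ℝ := fun s => f (ZMod.castHom hdN (ZMod d) s) with hx
    have hLx : Lmap n N x = 0 := by
      funext s
      show ∑ j ∈ range (n+1), x (s + 1 - (j : ZMod N)) = 0
      have : ∀ j : ℕ, x (s + 1 - (j : ZMod N))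
          = f (ZMod.castHom hdN (ZMod d) (s+1) - (j : ZMod d)) := by
        intro j
        show f (ZMod.castHom hdN (ZMod d) (s + 1 - (j : ZMod N))) = _
        rw [map_sub, map_natCast]
      simp_rw [this]
      rw [hm, sum_range_mul_cast' (fun k => f (ZMod.castHom hdN (ZMod d) (s+1) - k)) m]
      have : ∑ k : ZMod d, f (ZMod.castHom hdN (ZMod d) (s+1) - k) = ∑ k : ZMod d, f k := by
        apply Fintype.sum_equiv (Equiv.subLeft (ZMod.castHom hdN (ZMod d) (s+1)))
        intro k; rfl
      rw [this, hsumf, mul_zero]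
    have hx0 : x = 0 := by
      apply h.injective
      rw [hLx, map_zero]
    have : x 0 = (d : ℝ) - 1 := by simp [hx, hf]
    rw [hx0] at this
    simp at this
    have : (1:ℝ) < (d:ℝ) := by exact_mod_cast (by omega : 1 < d)
    linarith
  · -- coprime → bijective
    intro hcop
    have hinj : Function.Injective (Lmap n N) := by
      rw [injective_iff_map_eq_zero]
      intro x hLx
      have hS : ∀ s : ZMod N, ∑ j ∈ range (n+1), x (s - (j : ZMod N)) = 0 := by
        intro s
        have h' : ∑ j ∈ range (n+1), x (s - 1 + 1 - (j : ZMod N)) = 0 := congrFun hLx (s-1)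
        simpa [sub_add_cancel] using h' 
      have hstep : ∀ s : ZMod N, x (s + 1) = x (s - (n : ZMod N)) := by
        intro s
        have h1 := hS (s + 1)
        have h2 := hS s
        rw [Finset.sum_range_succ'] at h1
        rw [Finset.sum_range_succ] at h2
        have hre : ∀ j : ℕ, x (s + 1 - ((j + 1 : ℕ) : ZMod N)) = x (s - (j : ZMod N)) := by
          intro j; push_cast; ring_nf
        simp_rw [hre] at h1
        simp only [Nat.cast_zero, sub_zero] at h1
        linarith [h1, h2]
      have hper : ∀ s : ZMod N, x (s + ((n : ZMod N) + 1)) = x s := by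
        intro s
        have := hstep (s + (n : ZMod N))
        rw [add_sub_cancel_right] at this
        rw [← this]; ring_nf
      have hmul : ∀ k : ℕ, x ((k : ZMod N) * ((n : ZMod N) + 1)) = x 0 := by
        intro k
        induction k with
        | zero => simp
        | succ k ih =>
          push_cast
          rw [add_mul, one_mul, hper, ih]
      have hconst : ∀ s : ZMod N, x s = x 0 := by
        intro s
        have hu : IsUnit ((n : ZMod N) + 1) := by
          have : ((n + 1 : ℕ) : ZMod N) = (n : ZMod N) + 1 := by push_cast; ring
          rw [← this]
          exact ⟨ZMod.unitOfCoprime (n+1) hcop.symm, ZMod.coe_unitOfCoprime _ _⟩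
        obtain ⟨u, hu⟩ := hu
        set k : ℕ := ((u⁻¹ : (ZMod N)ˣ) * s : ZMod N).val with hk
        have hk' : (k : ZMod N) = (u⁻¹ : (ZMod N)ˣ) * s := ZMod.natCast_rightInverse _
        have := hmul k
        rw [hk', ← hu] at this
        rw [← this]
        congr 1
        rw [mul_comm _ (u : ZMod N), ← mul_assoc, Units.mul_inv, one_mul]
      have hzero : x 0 = 0 := by
        have := hS 0
        simp_rw [hconst] at this
        simp only [Finset.sum_const, Finset.card_range, nsmul_eq_mul] at this
        have hne : ((n:ℝ) + 1) ≠ 0 := by positivity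
        have : ((n : ℝ) + 1) * x 0 = 0 := by push_cast at this ⊢; linarith
        exact (mul_eq_zero.mp this).resolve_left hne
      funext s
      rw [hconst s, hzero]; rfl
    exact ⟨hinj, LinearMap.injective_iff_surjective.mp hinj⟩
end

section
/- For every k : ZMod N → (Fin n → ℝ) and all θ, η : ZMod N → (Fin n → ℝ), the operator ℋ(k) is antisymmetric with respect to the pairing ⟨θ,η⟩ = Σ_{s ∈ ZMod N} Σ_{i=1}^{n} θ^i_s η^i_s, i.e., ⟨θ, ℋ(k)η⟩ = −⟨ℋ(k)θ, η⟩. -/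
/-- The operator `ℋ(k)` acting on sequences `θ : ZMod N → Fin n → ℝ`.
With the paper's components `i = 1,…,n` corresponding to the Lean indices
`0,…,n-1` (so the paper's `θ^i` is `θ · ⟨i-1,_⟩`), this is
`(ℋ(k)θ)^i_s = θ^{n+1−i}_{s+n+1−i} − θ^{n+1−i}_{s−i}
  + Σ_{j=1}^{n−i} ( k^{i+j}_{s+j} θ^j_{s+j} − k^{i+j}_s θ^j_{s−i} )`,
where the component selections are encoded by indicator sums over `Fin n`. -/
noncomputable def Hop {n N : ℕ} (k : ZMod N → Fin n → ℝ)
    (θ : ZMod N → Fin n → ℝ) : ZMod N → Fin n → ℝ := fun s i =>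
  (∑ m : Fin n, if (m : ℕ) + (i : ℕ) + 1 = n then
      θ (s + ((n - (i : ℕ) : ℕ) : ZMod N)) m
        - θ (s - (((i : ℕ) + 1 : ℕ) : ZMod N)) m
    else 0)
  + ∑ j : Fin n, ∑ m : Fin n, if (m : ℕ) = (i : ℕ) + (j : ℕ) + 1 then
      k (s + (((j : ℕ) + 1 : ℕ) : ZMod N)) m *
          θ (s + (((j : ℕ) + 1 : ℕ) : ZMod N)) j
        - k s m * θ (s - (((i : ℕ) + 1 : ℕ) : ZMod N)) j
    else 0

/-- The "boundary" part of `ℋ(k)` (independent of `k`). -/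
noncomputable def Aop {n N : ℕ} (θ : ZMod N → Fin n → ℝ) : ZMod N → Fin n → ℝ :=
  fun s i =>
  ∑ m : Fin n, if (m : ℕ) + (i : ℕ) + 1 = n then
      θ (s + ((n - (i : ℕ) : ℕ) : ZMod N)) m
        - θ (s - (((i : ℕ) + 1 : ℕ) : ZMod N)) m
    else 0

/-- The `k`-dependent part of `ℋ(k)`. -/
noncomputable def Kop {n N : ℕ} (k θ : ZMod N → Fin n → ℝ) : ZMod N → Fin n → ℝ :=
  fun s i =>
  ∑ j : Fin n, ∑ m : Fin n, if (m : ℕ) = (i : ℕ) + (j : ℕ) + 1 then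
      k (s + (((j : ℕ) + 1 : ℕ) : ZMod N)) m *
          θ (s + (((j : ℕ) + 1 : ℕ) : ZMod N)) j
        - k s m * θ (s - (((i : ℕ) + 1 : ℕ) : ZMod N)) j
    else 0

lemma Hop_eq {n N : ℕ} (k θ : ZMod N → Fin n → ℝ) (s : ZMod N) (i : Fin n) :
    Hop k θ s i = Aop θ s i + Kop k θ s i := rfl

lemma sumShift {N : ℕ} [NeZero N] (c : ZMod N) (f : ZMod N → ℝ) :
    ∑ s : ZMod N, f (s + c) = ∑ s : ZMod N, f s :=
  Fintype.sum_equiv (Equiv.addRight c) _ _ (fun _ => rfl)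

lemma sum_rot3 {M : Type*} [AddCommMonoid M] {α β γ : Type*}
    [Fintype α] [Fintype β] [Fintype γ] (f : α → β → γ → M) :
    ∑ a : α, ∑ b : β, ∑ c : γ, f a b c
      = ∑ b : β, ∑ c : γ, ∑ a : α, f a b c := by
  rw [Finset.sum_comm]
  exact Finset.sum_congr rfl fun b _ => Finset.sum_comm

lemma sum_rot4 {M : Type*} [AddCommMonoid M] {α β γ δ : Type*}
    [Fintype α] [Fintype β] [Fintype γ] [Fintype δ] (f : α → β → γ → δ → M) :
    ∑ a : α, ∑ b : β, ∑ c : γ, ∑ d : δ, f a b c d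
      = ∑ b : β, ∑ c : γ, ∑ d : δ, ∑ a : α, f a b c d := by
  rw [Finset.sum_comm]
  exact Finset.sum_congr rfl fun b _ => sum_rot3 _

lemma A_anti {n N : ℕ} [NeZero N] (θ η : ZMod N → Fin n → ℝ) :
    (∑ s : ZMod N, ∑ i : Fin n, θ s i * Aop η s i)
      + (∑ s : ZMod N, ∑ i : Fin n, Aop θ s i * η s i) = 0 := by
  have h1 : (∑ s : ZMod N, ∑ i : Fin n, θ s i * Aop η s i)
      = ∑ i : Fin n, ∑ m : Fin n, ∑ s : ZMod N,
          (if (m : ℕ) + (i : ℕ) + 1 = n then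
            θ s i * (η (s + ((n - (i : ℕ) : ℕ) : ZMod N)) m
              - η (s - (((i : ℕ) + 1 : ℕ) : ZMod N)) m) else 0) := by
    refine Eq.trans ?_ (sum_rot3 _)
    unfold Aop
    simp only [Finset.mul_sum, mul_ite, mul_zero]
  have h2 : (∑ s : ZMod N, ∑ i : Fin n, Aop θ s i * η s i)
      = ∑ i : Fin n, ∑ m : Fin n, ∑ s : ZMod N,
          (if (i : ℕ) + (m : ℕ) + 1 = n then
            (θ (s + ((n - (m : ℕ) : ℕ) : ZMod N)) i
              - θ (s - (((m : ℕ) + 1 : ℕ) : ZMod N)) i) * η s m else 0) := by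
    refine Eq.trans ?_ ((sum_rot3 _).trans Finset.sum_comm)
    unfold Aop
    simp only [Finset.sum_mul, ite_mul, zero_mul]
  rw [h1, h2, ← Finset.sum_add_distrib]
  refine Finset.sum_eq_zero fun i _ => ?_
  rw [← Finset.sum_add_distrib]
  refine Finset.sum_eq_zero fun m _ => ?_
  by_cases h : (m : ℕ) + (i : ℕ) + 1 = n
  · simp only [if_pos h, if_pos (show (i : ℕ) + (m : ℕ) + 1 = n by omega)]
    have e1 : n - (i : ℕ) = (m : ℕ) + 1 := by omega
    have e2 : n - (m : ℕ) = (i : ℕ) + 1 := by omega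
    simp only [e1, e2]
    set a : ZMod N := (((m : ℕ) + 1 : ℕ) : ZMod N) with ha
    set b : ZMod N := (((i : ℕ) + 1 : ℕ) : ZMod N) with hb
    have t1 := sumShift a (fun s => θ (s - a) i * η s m)
    have s1 : (∑ s : ZMod N, θ s i * η (s + a) m)
        = ∑ s : ZMod N, θ (s - a) i * η s m := by
      rw [← t1]
      refine Finset.sum_congr rfl fun s _ => ?_
      simp only [add_sub_cancel_right]
    have t2 := sumShift b (fun s => θ s i * η (s - b) m)
    have s2 : (∑ s : ZMod N, θ (s + b) i * η s m)
        = ∑ s : ZMod N, θ s i * η (s - b) m := by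
      rw [← t2]
      refine Finset.sum_congr rfl fun s _ => ?_
      simp only [add_sub_cancel_right]
    simp only [mul_sub, sub_mul, Finset.sum_sub_distrib]
    linarith [s1, s2]
  · simp only [if_neg h, if_neg (show ¬((i : ℕ) + (m : ℕ) + 1 = n) by omega),
      Finset.sum_const_zero, add_zero]

lemma K_anti {n N : ℕ} [NeZero N] (k θ η : ZMod N → Fin n → ℝ) :
    (∑ s : ZMod N, ∑ i : Fin n, θ s i * Kop k η s i)
      + (∑ s : ZMod N, ∑ i : Fin n, Kop k θ s i * η s i) = 0 := by
  have h1 : (∑ s : ZMod N, ∑ i : Fin n, θ s i * Kop k η s i)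
      = ∑ i : Fin n, ∑ j : Fin n, ∑ m : Fin n, ∑ s : ZMod N,
          (if (m : ℕ) = (i : ℕ) + (j : ℕ) + 1 then
            θ s i * (k (s + (((j : ℕ) + 1 : ℕ) : ZMod N)) m
                * η (s + (((j : ℕ) + 1 : ℕ) : ZMod N)) j
              - k s m * η (s - (((i : ℕ) + 1 : ℕ) : ZMod N)) j) else 0) := by
    refine Eq.trans ?_ (sum_rot4 _)
    unfold Kop
    simp only [Finset.mul_sum, mul_ite, mul_zero]
  have h2 : (∑ s : ZMod N, ∑ i : Fin n, Kop k θ s i * η s i)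
      = ∑ i : Fin n, ∑ j : Fin n, ∑ m : Fin n, ∑ s : ZMod N,
          (if (m : ℕ) = (j : ℕ) + (i : ℕ) + 1 then
            (k (s + (((i : ℕ) + 1 : ℕ) : ZMod N)) m
                * θ (s + (((i : ℕ) + 1 : ℕ) : ZMod N)) i
              - k s m * θ (s - (((j : ℕ) + 1 : ℕ) : ZMod N)) i) * η s j else 0) := by
    refine Eq.trans ?_ ((sum_rot4 _).trans Finset.sum_comm)
    unfold Kop
    simp only [Finset.sum_mul, ite_mul, zero_mul]
  rw [h1, h2, ← Finset.sum_add_distrib]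
  refine Finset.sum_eq_zero fun i _ => ?_
  rw [← Finset.sum_add_distrib]
  refine Finset.sum_eq_zero fun j _ => ?_
  rw [← Finset.sum_add_distrib]
  refine Finset.sum_eq_zero fun m _ => ?_
  by_cases h : (m : ℕ) = (i : ℕ) + (j : ℕ) + 1
  · simp only [if_pos h, if_pos (show (m : ℕ) = (j : ℕ) + (i : ℕ) + 1 by omega)]
    set c : ZMod N := (((j : ℕ) + 1 : ℕ) : ZMod N) with hc
    set d : ZMod N := (((i : ℕ) + 1 : ℕ) : ZMod N) with hd
    have t1 := sumShift c (fun s => k s m * θ (s - c) i * η s j)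
    have s1 : (∑ s : ZMod N, θ s i * (k (s + c) m * η (s + c) j))
        = ∑ s : ZMod N, k s m * θ (s - c) i * η s j := by
      rw [← t1]
      refine Finset.sum_congr rfl fun s _ => ?_
      simp only [add_sub_cancel_right]
      ring
    have t2 := sumShift d (fun s => θ s i * (k s m * η (s - d) j))
    have s2 : (∑ s : ZMod N, k (s + d) m * θ (s + d) i * η s j)
        = ∑ s : ZMod N, θ s i * (k s m * η (s - d) j) := by
      rw [← t2]
      refine Finset.sum_congr rfl fun s _ => ?_
      simp only [add_sub_cancel_right]
      ring
    simp only [mul_sub, sub_mul, Finset.sum_sub_distrib]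
    linarith [s1, s2]
  · simp only [if_neg h, if_neg (show ¬((m : ℕ) = (j : ℕ) + (i : ℕ) + 1) by omega),
      Finset.sum_const_zero, add_zero]

/-- `ℋ(k)` is antisymmetric for the pairing
`⟨θ,η⟩ = Σ_s Σ_i θ^i_s η^i_s`. -/
theorem stmt_8 {n N : ℕ} [NeZero N] (hn : 1 ≤ n)
    (k θ η : ZMod N → Fin n → ℝ) :
    (∑ s : ZMod N, ∑ i : Fin n, θ s i * Hop k η s i)
      = - ∑ s : ZMod N, ∑ i : Fin n, Hop k θ s i * η s i := by
  rw [eq_neg_iff_add_eq_zero]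
  have e1 : ∀ s : ZMod N, ∀ i : Fin n,
      θ s i * Hop k η s i = θ s i * Aop η s i + θ s i * Kop k η s i := fun s i => by
    rw [Hop_eq]; ring
  have e2 : ∀ s : ZMod N, ∀ i : Fin n,
      Hop k θ s i * η s i = Aop θ s i * η s i + Kop k θ s i * η s i := fun s i => by
    rw [Hop_eq]; ring
  simp only [e1, e2, Finset.sum_add_distrib]
  have hA := A_anti θ η
  have hK := K_anti k θ η
  linarith
end

section
/- The operator ℋ is a Hamiltonian (Poisson) operator: writing H(k) for the matrix of ℋ(k) with entries H(k)_{αβ} indexed by α = (s,i), β = (r,j) ∈ ZMod N × {1,…,n} (so that (ℋ(k)θ)^i_s = Σ_{(r,j)} H(k)_{(s,i),(r,j)} θ^j_r, each entry being an affine function of the coordinates k^m_r), for every k and all triples of indices α, β, γ the coordinate Jacobi identity holds: Σ_δ ( H(k)_{δα} · ∂H(k)_{βγ}/∂k_δ + H(k)_{δβ} · ∂H(k)_{γα}/∂k_δ + H(k)_{δγ} · ∂H(k)_{αβ}/∂k_δ ) = 0, where for δ = (r,m) the symbol ∂/∂k_δ denotes the partial derivative with respect to the coordinate k^m_r. -/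
/-- The matrix `H(k)_{(s,i),(r,j)}` of the operator `ℋ(k)`; each entry is an affine
function of the coordinates `k^m_r`. -/
noncomputable def Hmat {n N : ℕ} (k : ZMod N → Fin n → ℝ)
    (s : ZMod N) (i : Fin n) (r : ZMod N) (j : Fin n) : ℝ :=
  (if (j : ℕ) + (i : ℕ) + 1 = n ∧ r = s + ((n - (i : ℕ) : ℕ) : ZMod N)
    then 1 else 0)
  - (if (j : ℕ) + (i : ℕ) + 1 = n ∧ r = s - (((i : ℕ) + 1 : ℕ) : ZMod N)
    then 1 else 0)
  + ∑ m : Fin n, if (m : ℕ) = (i : ℕ) + (j : ℕ) + 1 then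
      (if r = s + (((j : ℕ) + 1 : ℕ) : ZMod N) then k r m else 0)
      - (if r = s - (((i : ℕ) + 1 : ℕ) : ZMod N) then k s m else 0)
    else 0

noncomputable def G {n N : ℕ} (k : ZMod N → Fin n → ℝ) (t : ZMod N) (c : ℕ) : ℝ :=
  if c = n then 1 else ∑ m : Fin n, if (m : ℕ) = c then k t m else 0

lemma G_of_gt {n N : ℕ} (k : ZMod N → Fin n → ℝ) (t : ZMod N) (c : ℕ) (h : n < c) :
    G k t c = 0 := by
  unfold G
  rw [if_neg (by omega)]
  exact Finset.sum_eq_zero fun m _ => if_neg (by have := m.isLt; omega)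

lemma swap_sum {n : ℕ} (P Q : Prop) [Decidable P] [Decidable Q] (c : ℕ) (f g : Fin n → ℝ) :
    (∑ m : Fin n, if (m : ℕ) = c then
        ((if P then f m else 0) - (if Q then g m else 0)) else 0)
    = (if P then ∑ m : Fin n, if (m : ℕ) = c then f m else 0 else 0)
      - (if Q then ∑ m : Fin n, if (m : ℕ) = c then g m else 0 else 0) := by
  have key : ∀ m : Fin n, (if (m : ℕ) = c then
        ((if P then f m else 0) - (if Q then g m else 0)) else 0)
      = (if P then (if (m : ℕ) = c then f m else 0) else 0)
        - (if Q then (if (m : ℕ) = c then g m else 0) else 0) := by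
    intro m; split_ifs <;> simp
  rw [Finset.sum_congr rfl fun m _ => key m, Finset.sum_sub_distrib]
  congr 1 <;> split_ifs <;> simp

lemma Hmat_eq {n N : ℕ} (k : ZMod N → Fin n → ℝ) (s : ZMod N) (i : Fin n) (r : ZMod N)
    (j : Fin n) :
    Hmat k s i r j =
      (if r = s + (((j : ℕ) + 1 : ℕ) : ZMod N) then G k r ((i : ℕ) + (j : ℕ) + 1) else 0)
      - (if r = s - (((i : ℕ) + 1 : ℕ) : ZMod N) then G k s ((i : ℕ) + (j : ℕ) + 1) else 0) := by
  unfold Hmat G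
  by_cases h : (i : ℕ) + (j : ℕ) + 1 = n
  · have hji : (j : ℕ) + (i : ℕ) + 1 = n := by omega
    have hni : (n - (i : ℕ) : ℕ) = (j : ℕ) + 1 := by omega
    have hs : ∀ m : Fin n, ¬ ((m : ℕ) = n) :=
      fun m => by have := m.isLt; omega
    simp [hji, hni, h, hs]
  · have hji : ¬((j : ℕ) + (i : ℕ) + 1 = n) := by omega
    simp only [h, hji, false_and, if_false, sub_zero, zero_add]
    exact swap_sum _ _ _ _ _


lemma part1 {n N : ℕ} [NeZero N] (k θ : ZMod N → Fin n → ℝ) (s : ZMod N) (i : Fin n) :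
    Hop k θ s i = ∑ r : ZMod N, ∑ j : Fin n, Hmat k s i r j * θ r j := by
  rw [Finset.sum_comm]
  have hr : ∀ j : Fin n, (∑ r : ZMod N, Hmat k s i r j * θ r j)
      = G k (s + (((j:ℕ)+1 : ℕ) : ZMod N)) ((i:ℕ)+(j:ℕ)+1)
          * θ (s + (((j:ℕ)+1:ℕ) : ZMod N)) j
        - G k s ((i:ℕ)+(j:ℕ)+1) * θ (s - (((i:ℕ)+1:ℕ) : ZMod N)) j := by
    intro j
    have key : ∀ r : ZMod N, Hmat k s i r j * θ r j
        = (if r = s + (((j:ℕ)+1:ℕ):ZMod N) then G k r ((i:ℕ)+(j:ℕ)+1) * θ r j else 0)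
          - (if r = s - (((i:ℕ)+1:ℕ):ZMod N)
              then G k s ((i:ℕ)+(j:ℕ)+1) * θ (s - (((i:ℕ)+1:ℕ):ZMod N)) j else 0) := by
      intro r
      rw [Hmat_eq]
      split_ifs with h1 h2 h2 <;> first | (subst h2; ring) | ring
    rw [Finset.sum_congr rfl fun r _ => key r, Finset.sum_sub_distrib,
      Finset.sum_ite_eq' Finset.univ, Finset.sum_ite_eq' Finset.univ]
    simp
  rw [Finset.sum_congr rfl fun j _ => hr j]
  unfold Hop
  rw [← Finset.sum_add_distrib]
  refine Finset.sum_congr rfl fun j _ => ?_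
  by_cases h : (i : ℕ) + (j : ℕ) + 1 = n
  · have hji : (j : ℕ) + (i : ℕ) + 1 = n := by omega
    have hni : (n - (i : ℕ) : ℕ) = (j : ℕ) + 1 := by omega
    have hs : ∀ m : Fin n, ¬ ((m : ℕ) = (i : ℕ) + (j : ℕ) + 1) :=
      fun m => by have := m.isLt; omega
    unfold G
    rw [if_pos h, if_pos h, Finset.sum_eq_zero fun m _ => if_neg (hs m), if_pos hji, hni]
    ring
  · have hji : ¬ ((j : ℕ) + (i : ℕ) + 1 = n) := by omega
    unfold G
    rw [if_neg h, if_neg h, if_neg hji, zero_add]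
    have key : ∀ m : Fin n, (if (m:ℕ) = (i:ℕ)+(j:ℕ)+1 then
          k (s + (((j:ℕ)+1:ℕ):ZMod N)) m * θ (s + (((j:ℕ)+1:ℕ):ZMod N)) j
            - k s m * θ (s - (((i:ℕ)+1:ℕ):ZMod N)) j else 0)
        = (if (m:ℕ) = (i:ℕ)+(j:ℕ)+1 then k (s + (((j:ℕ)+1:ℕ):ZMod N)) m else 0)
            * θ (s + (((j:ℕ)+1:ℕ):ZMod N)) j
          - (if (m:ℕ) = (i:ℕ)+(j:ℕ)+1 then k s m else 0)
            * θ (s - (((i:ℕ)+1:ℕ):ZMod N)) j := by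
      intro m; split_ifs <;> ring
    rw [Finset.sum_congr rfl fun m _ => key m, Finset.sum_sub_distrib,
      ← Finset.sum_mul, ← Finset.sum_mul]

lemma hasFDerivAt_eval {n N : ℕ} [NeZero N] (k : ZMod N → Fin n → ℝ) (t : ZMod N)
    (m : Fin n) :
    HasFDerivAt (fun k' : ZMod N → Fin n → ℝ => k' t m)
      ((ContinuousLinearMap.proj (R := ℝ) (φ := fun _ : Fin n => ℝ) m).comp
        (ContinuousLinearMap.proj (R := ℝ) (φ := fun _ : ZMod N => Fin n → ℝ) t)) k :=
  ((ContinuousLinearMap.proj (R := ℝ) (φ := fun _ : Fin n => ℝ) m).comp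
    (ContinuousLinearMap.proj (R := ℝ) (φ := fun _ : ZMod N => Fin n → ℝ) t)).hasFDerivAt

lemma hasFDerivAt_Hmat {n N : ℕ} [NeZero N] (k : ZMod N → Fin n → ℝ) (s : ZMod N)
    (i : Fin n) (r : ZMod N) (j : Fin n) :
    HasFDerivAt (fun k' : ZMod N → Fin n → ℝ => Hmat k' s i r j)
      (∑ m : Fin n, if (m : ℕ) = (i : ℕ) + (j : ℕ) + 1 then
        (((if r = s + (((j : ℕ) + 1 : ℕ) : ZMod N) then
            (ContinuousLinearMap.proj (R := ℝ) (φ := fun _ : Fin n => ℝ) m).comp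
              (ContinuousLinearMap.proj (R := ℝ) (φ := fun _ : ZMod N => Fin n → ℝ) r) else 0)
         - (if r = s - (((i : ℕ) + 1 : ℕ) : ZMod N) then
            (ContinuousLinearMap.proj (R := ℝ) (φ := fun _ : Fin n => ℝ) m).comp
              (ContinuousLinearMap.proj (R := ℝ) (φ := fun _ : ZMod N => Fin n → ℝ) s) else 0)) :
            (ZMod N → Fin n → ℝ) →L[ℝ] ℝ)
        else 0) k := by
  unfold Hmat
  apply HasFDerivAt.const_add
  refine HasFDerivAt.fun_sum fun m _ => ?_
  by_cases hm : (m : ℕ) = (i : ℕ) + (j : ℕ) + 1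
  · simp only [if_pos hm]
    apply HasFDerivAt.sub <;> split_ifs <;>
      first
        | exact hasFDerivAt_eval k _ m
        | exact hasFDerivAt_const _ _
  · simp only [if_neg hm]
    exact hasFDerivAt_const _ _

lemma fderiv_Hmat {n N : ℕ} [NeZero N] (k : ZMod N → Fin n → ℝ) (s : ZMod N)
    (i : Fin n) (r : ZMod N) (j : Fin n) (v : ZMod N → Fin n → ℝ) :
    fderiv ℝ (fun k' : ZMod N → Fin n → ℝ => Hmat k' s i r j) k v
      = (if r = s + (((j : ℕ) + 1 : ℕ) : ZMod N) then
            ∑ m : Fin n, if (m : ℕ) = (i : ℕ) + (j : ℕ) + 1 then v r m else 0 else 0)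
        - (if r = s - (((i : ℕ) + 1 : ℕ) : ZMod N) then
            ∑ m : Fin n, if (m : ℕ) = (i : ℕ) + (j : ℕ) + 1 then v s m else 0 else 0) := by
  rw [(hasFDerivAt_Hmat k s i r j).fderiv]
  rw [ContinuousLinearMap.sum_apply]
  simp only [apply_ite (fun (F : (ZMod N → Fin n → ℝ) →L[ℝ] ℝ) => F v),
    ContinuousLinearMap.sub_apply, ContinuousLinearMap.zero_apply,
    ContinuousLinearMap.comp_apply, ContinuousLinearMap.proj_apply]
  exact swap_sum _ _ _ _ _

lemma Gv_single {n N : ℕ} [NeZero N] (p : ZMod N) (e : Fin n) (t : ZMod N) (c : ℕ) :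
    (∑ m : Fin n, if (m : ℕ) = c then (Pi.single p (Pi.single e (1:ℝ)) : ZMod N → Fin n → ℝ) t m else 0)
      = if t = p ∧ (e : ℕ) = c then 1 else 0 := by
  rcases eq_or_ne t p with h | h
  · subst h
    rw [Finset.sum_eq_single e]
    · simp [Pi.single_apply]
    · intro m _ hm
      simp [Pi.single_apply, hm]
    · simp
  · simp [Pi.single_apply, h]

lemma collapse {n N : ℕ} [NeZero N] (f : ZMod N → Fin n → ℝ) (t : ZMod N) (E : ℕ) :
    ∑ δ : ZMod N × Fin n, f δ.1 δ.2 * (if t = δ.1 ∧ (δ.2 : ℕ) = E then 1 else 0)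
      = ∑ e : Fin n, if (e : ℕ) = E then f t e else 0 := by
  rw [Fintype.sum_prod_type]
  rw [Finset.sum_eq_single t]
  · refine Finset.sum_congr rfl fun e _ => ?_
    by_cases he : (e : ℕ) = E <;> simp [he]
  · intro p _ hp
    refine Finset.sum_eq_zero fun e _ => ?_
    rw [if_neg (fun hc => hp hc.1.symm), mul_zero]
  · simp

noncomputable def J {n N : ℕ} (k : ZMod N → Fin n → ℝ) (s₁ : ZMod N) (a : ℕ)
    (s₂ : ZMod N) (b : ℕ) (s₃ : ZMod N) (c : ℕ) : ℝ :=
  if b + c + 1 < n then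
    ((if s₃ = s₂ + ((c + 1 : ℕ) : ZMod N) then
        ((if s₁ = s₃ + ((a + 1 : ℕ) : ZMod N) then G k s₁ (a + b + c + 2) else 0)
         - (if s₁ = s₃ - ((b + c + 2 : ℕ) : ZMod N) then G k s₃ (a + b + c + 2) else 0))
      else 0)
     - (if s₃ = s₂ - ((b + 1 : ℕ) : ZMod N) then
        ((if s₁ = s₂ + ((a + 1 : ℕ) : ZMod N) then G k s₁ (a + b + c + 2) else 0)
         - (if s₁ = s₂ - ((b + c + 2 : ℕ) : ZMod N) then G k s₂ (a + b + c + 2) else 0))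
      else 0))
  else 0

lemma HHeq {n N : ℕ} [NeZero N] (k : ZMod N → Fin n → ℝ) (s₁ : ZMod N) (a : Fin n)
    (b c : ℕ) (t : ZMod N) :
    (∑ e : Fin n, if (e : ℕ) = b + c + 1 then Hmat k t e s₁ a else 0)
      = if b + c + 1 < n then
          ((if s₁ = t + (((a : ℕ) + 1 : ℕ) : ZMod N) then
              G k s₁ ((a : ℕ) + b + c + 2) else 0)
           - (if s₁ = t - ((b + c + 2 : ℕ) : ZMod N) then
              G k t ((a : ℕ) + b + c + 2) else 0))
        else 0 := by
  by_cases hE : b + c + 1 < n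
  · rw [if_pos hE, Finset.sum_eq_single (⟨b + c + 1, hE⟩ : Fin n)]
    · rw [if_pos rfl, Hmat_eq]
      have h1 : ((⟨b + c + 1, hE⟩ : Fin n) : ℕ) + (a : ℕ) + 1 = (a : ℕ) + b + c + 2 := by
        simp; omega
      have h2 : ((⟨b + c + 1, hE⟩ : Fin n) : ℕ) + 1 = b + c + 2 := by simp
      rw [h1, h2]
    · intro m _ hm
      exact if_neg fun h => hm (Fin.ext h)
    · simp
  · rw [if_neg hE]
    exact Finset.sum_eq_zero fun m _ => if_neg fun h => hE (lt_of_eq_of_lt h.symm m.isLt)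

lemma sum_term {n N : ℕ} [NeZero N] (k : ZMod N → Fin n → ℝ) (s₁ : ZMod N) (a : Fin n)
    (s₂ : ZMod N) (b : Fin n) (s₃ : ZMod N) (c : Fin n) :
    (∑ δ : ZMod N × Fin n, Hmat k δ.1 δ.2 s₁ a *
        fderiv ℝ (fun k' : ZMod N → Fin n → ℝ => Hmat k' s₂ b s₃ c) k
          (Pi.single δ.1 (Pi.single δ.2 (1 : ℝ))))
      = J k s₁ (a : ℕ) s₂ (b : ℕ) s₃ (c : ℕ) := by
  have hf : ∀ δ : ZMod N × Fin n,
      Hmat k δ.1 δ.2 s₁ a * fderiv ℝ (fun k' : ZMod N → Fin n → ℝ => Hmat k' s₂ b s₃ c) k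
          (Pi.single δ.1 (Pi.single δ.2 (1 : ℝ)))
      = (if s₃ = s₂ + (((c : ℕ) + 1 : ℕ) : ZMod N) then
            Hmat k δ.1 δ.2 s₁ a *
              (if s₃ = δ.1 ∧ (δ.2 : ℕ) = (b : ℕ) + (c : ℕ) + 1 then 1 else 0) else 0)
        - (if s₃ = s₂ - (((b : ℕ) + 1 : ℕ) : ZMod N) then
            Hmat k δ.1 δ.2 s₁ a *
              (if s₂ = δ.1 ∧ (δ.2 : ℕ) = (b : ℕ) + (c : ℕ) + 1 then 1 else 0) else 0) := by
    intro δ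
    rw [fderiv_Hmat, Gv_single, Gv_single]
    split_ifs <;> ring
  rw [Finset.sum_congr rfl fun δ _ => hf δ, Finset.sum_sub_distrib]
  have p1 : (∑ δ : ZMod N × Fin n, if s₃ = s₂ + (((c : ℕ) + 1 : ℕ) : ZMod N) then
        Hmat k δ.1 δ.2 s₁ a *
          (if s₃ = δ.1 ∧ (δ.2 : ℕ) = (b : ℕ) + (c : ℕ) + 1 then 1 else 0) else 0)
      = if s₃ = s₂ + (((c : ℕ) + 1 : ℕ) : ZMod N) then
          (∑ e : Fin n, if (e : ℕ) = (b : ℕ) + (c : ℕ) + 1 then Hmat k s₃ e s₁ a else 0)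
        else 0 := by
    split_ifs with h
    · exact collapse (fun p e => Hmat k p e s₁ a) s₃ _
    · simp
  have p2 : (∑ δ : ZMod N × Fin n, if s₃ = s₂ - (((b : ℕ) + 1 : ℕ) : ZMod N) then
        Hmat k δ.1 δ.2 s₁ a *
          (if s₂ = δ.1 ∧ (δ.2 : ℕ) = (b : ℕ) + (c : ℕ) + 1 then 1 else 0) else 0)
      = if s₃ = s₂ - (((b : ℕ) + 1 : ℕ) : ZMod N) then
          (∑ e : Fin n, if (e : ℕ) = (b : ℕ) + (c : ℕ) + 1 then Hmat k s₂ e s₁ a else 0)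
        else 0 := by
    split_ifs with h
    · exact collapse (fun p e => Hmat k p e s₁ a) s₂ _
    · simp
  rw [p1, p2, HHeq, HHeq]
  unfold J
  split_ifs <;> ring

lemma ite_sub_zero {P : Prop} [Decidable P] (x y : ℝ) :
    (if P then x - y else 0) = (if P then x else 0) - (if P then y else 0) := by
  split_ifs <;> simp

lemma key {n N : ℕ} [NeZero N] (k : ZMod N → Fin n → ℝ) (s₁ s₂ s₃ : ZMod N) (a b c : ℕ) :
    J k s₁ a s₂ b s₃ c + J k s₂ b s₃ c s₁ a + J k s₃ c s₁ a s₂ b = 0 := by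
  unfold J
  by_cases h : a + b + c + 2 ≤ n
  · rw [if_pos (show b + c + 1 < n by omega), if_pos (show c + a + 1 < n by omega),
      if_pos (show a + b + 1 < n by omega)]
    simp only [show b + c + a + 2 = a + b + c + 2 from by ring,
      show c + a + b + 2 = a + b + c + 2 from by ring]
    simp only [ite_sub_zero, ← ite_and]
    have e1 : (s₃ = s₂ + ((c + 1 : ℕ) : ZMod N) ∧ s₁ = s₃ + ((a + 1 : ℕ) : ZMod N))
        ↔ (s₁ = s₃ + ((a + 1 : ℕ) : ZMod N) ∧ s₂ = s₁ - ((c + a + 2 : ℕ) : ZMod N)) := by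
      constructor <;> rintro ⟨h1, h2⟩ <;> subst h1 <;> subst h2 <;>
        exact ⟨by push_cast; ring, by push_cast; ring⟩
    have e2 : (s₃ = s₂ + ((c + 1 : ℕ) : ZMod N) ∧ s₁ = s₃ - ((b + c + 2 : ℕ) : ZMod N))
        ↔ (s₂ = s₁ + ((b + 1 : ℕ) : ZMod N) ∧ s₃ = s₂ + ((c + 1 : ℕ) : ZMod N)) := by
      constructor <;> rintro ⟨h1, h2⟩ <;> subst h1 <;> subst h2 <;>
        exact ⟨by push_cast; ring, by push_cast; ring⟩
    have e3 : (s₃ = s₂ - ((b + 1 : ℕ) : ZMod N) ∧ s₁ = s₂ + ((a + 1 : ℕ) : ZMod N))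
        ↔ (s₂ = s₁ - ((a + 1 : ℕ) : ZMod N) ∧ s₃ = s₁ - ((a + b + 2 : ℕ) : ZMod N)) := by
      constructor <;> rintro ⟨h1, h2⟩ <;> subst h1 <;> subst h2 <;>
        exact ⟨by push_cast; ring, by push_cast; ring⟩
    have e4 : (s₃ = s₂ - ((b + 1 : ℕ) : ZMod N) ∧ s₁ = s₂ - ((b + c + 2 : ℕ) : ZMod N))
        ↔ (s₁ = s₃ - ((c + 1 : ℕ) : ZMod N) ∧ s₂ = s₃ + ((b + 1 : ℕ) : ZMod N)) := by
      constructor <;> rintro ⟨h1, h2⟩ <;> subst h1 <;> subst h2 <;>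
        exact ⟨by push_cast; ring, by push_cast; ring⟩
    have e5 : (s₁ = s₃ + ((a + 1 : ℕ) : ZMod N) ∧ s₂ = s₁ + ((b + 1 : ℕ) : ZMod N))
        ↔ (s₂ = s₁ + ((b + 1 : ℕ) : ZMod N) ∧ s₃ = s₂ - ((a + b + 2 : ℕ) : ZMod N)) := by
      constructor <;> rintro ⟨h1, h2⟩ <;> subst h1 <;> subst h2 <;>
        exact ⟨by push_cast; ring, by push_cast; ring⟩
    have e6 : (s₁ = s₃ - ((c + 1 : ℕ) : ZMod N) ∧ s₂ = s₃ - ((c + a + 2 : ℕ) : ZMod N))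
        ↔ (s₂ = s₁ - ((a + 1 : ℕ) : ZMod N) ∧ s₃ = s₁ + ((c + 1 : ℕ) : ZMod N)) := by
      constructor <;> rintro ⟨h1, h2⟩ <;> subst h1 <;> subst h2 <;>
        exact ⟨by push_cast; ring, by push_cast; ring⟩
    simp only [e1, e2, e3, e4, e5, e6]
    ring
  · simp only [show ∀ t : ZMod N, G k t (a + b + c + 2) = 0 from
        fun t => G_of_gt _ _ _ (by omega),
      show ∀ t : ZMod N, G k t (b + c + a + 2) = 0 from
        fun t => G_of_gt _ _ _ (by omega),
      show ∀ t : ZMod N, G k t (c + a + b + 2) = 0 from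
        fun t => G_of_gt _ _ _ (by omega)]
    simp

/-- `H(k)` is the matrix of `ℋ(k)`, and `ℋ` is a Hamiltonian (Poisson)
operator: for all indices `α, β, γ` the coordinate Jacobi identity
`Σ_δ ( H_{δα} ∂H_{βγ}/∂k_δ + H_{δβ} ∂H_{γα}/∂k_δ + H_{δγ} ∂H_{αβ}/∂k_δ ) = 0` holds,
where `∂/∂k_δ` is the directional derivative in the coordinate direction `δ`. -/
theorem stmt_9 {n N : ℕ} [NeZero N] (hn : 1 ≤ n) (k : ZMod N → Fin n → ℝ) :
    (∀ θ : ZMod N → Fin n → ℝ, ∀ (s : ZMod N) (i : Fin n),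
      Hop k θ s i = ∑ r : ZMod N, ∑ j : Fin n, Hmat k s i r j * θ r j) ∧
    (∀ α β γ : ZMod N × Fin n,
      ∑ δ : ZMod N × Fin n,
        (Hmat k δ.1 δ.2 α.1 α.2 *
            fderiv ℝ (fun k' : ZMod N → Fin n → ℝ => Hmat k' β.1 β.2 γ.1 γ.2) k
              (Pi.single δ.1 (Pi.single δ.2 (1 : ℝ)))
         + Hmat k δ.1 δ.2 β.1 β.2 *
            fderiv ℝ (fun k' : ZMod N → Fin n → ℝ => Hmat k' γ.1 γ.2 α.1 α.2) k
              (Pi.single δ.1 (Pi.single δ.2 (1 : ℝ)))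
         + Hmat k δ.1 δ.2 γ.1 γ.2 *
            fderiv ℝ (fun k' : ZMod N → Fin n → ℝ => Hmat k' α.1 α.2 β.1 β.2) k
              (Pi.single δ.1 (Pi.single δ.2 (1 : ℝ)))) = 0) := by
  constructor
  · exact fun θ s i => part1 k θ s i
  · intro α β γ
    rw [Finset.sum_add_distrib, Finset.sum_add_distrib,
      sum_term k α.1 α.2 β.1 β.2 γ.1 γ.2,
      sum_term k β.1 β.2 γ.1 γ.2 α.1 α.2,
      sum_term k γ.1 γ.2 α.1 α.2 β.1 β.2]
    exact key k α.1 β.1 γ.1 (α.2 : ℕ) (β.2 : ℕ) (γ.2 : ℕ)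
end

section
/- Let n ≥ 2 and N ≥ 1. Suppose k : ℝ → ZMod N → (Fin n → ℝ) is such that each component t ↦ k^i_s(t) is differentiable, k^1_s(t) ≠ 0 for all s and t, and k satisfies the lattice system (d/dt)k^i_s = k^{i+1}_{s+1}/k^1_{s+1} − k^{i+1}_s/k^1_{s−i} for i = 1,…,n−1 and (d/dt)k^n_s = 1/k^1_{s+1} − 1/k^1_{s−n}. Define the Miura transformation u^1_s = 1/(∏_{j=0}^{n} k^1_{s+j}) and u^i_s = k^i_{s+i−1}/(∏_{j=0}^{i−1} k^1_{s+j}) for i = 2,…,n. Then u satisfies the lattice system (d/dt)u^1_s = −u^1_s (u^2_{s+n} − u^2_{s−1}); (d/dt)u^i_s = u^{i+1}_s − u^{i+1}_{s−1} − u^i_s (u^2_{s+i−1} − u^2_{s−1}) for i = 2,…,n−1; and (d/dt)u^n_s = u^1_s − u^1_{s−1} − u^n_s (u^2_{s+n−1} − u^2_{s−1}). -/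
/-- The Miura transformation: with the paper's components `i = 1,…,n` corresponding
to the Lean indices `0,…,n-1`,
`u^1_s = 1/(k^1_s k^1_{s+1} ⋯ k^1_{s+n})` and
`u^i_s = k^i_{s+i−1}/(k^1_s k^1_{s+1} ⋯ k^1_{s+i−1})` for `i = 2,…,n`. -/
noncomputable def MiuraU {n N : ℕ} (k : ℝ → ZMod N → Fin n → ℝ) :
    ℝ → ZMod N → Fin n → ℝ := fun t s i =>
  if (i : ℕ) = 0 then
    (∏ j ∈ Finset.range (n + 1),
      k t (s + (j : ZMod N)) ⟨0, lt_of_le_of_lt (Nat.zero_le _) i.isLt⟩)⁻¹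
  else
    k t (s + ((i : ℕ) : ZMod N)) i /
      ∏ j ∈ Finset.range ((i : ℕ) + 1),
        k t (s + (j : ZMod N)) ⟨0, lt_of_le_of_lt (Nat.zero_le _) i.isLt⟩

set_option linter.unusedSectionVars false
set_option linter.unusedVariables false

section aux
variable {n N : ℕ} [NeZero N]

/-- `Vm` is the second Miura component `u^2_σ = k^1_{σ+1}/(k^1_σ k^1_{σ+1})`. -/
noncomputable def Vm (k : ℝ → ZMod N → Fin n → ℝ) (h0 : 0 < n) (h1 : 1 < n)
    (t : ℝ) (σ : ZMod N) : ℝ :=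
  k t (σ + 1) ⟨1, h1⟩ / (k t σ ⟨0, h0⟩ * k t (σ + 1) ⟨0, h0⟩)

lemma kderiv (k : ℝ → ZMod N → Fin n → ℝ) (h0 : 0 < n) (h1 : 1 < n) (hn : 2 ≤ n)
    (hdiff : ∀ (s : ZMod N) (i : Fin n), Differentiable ℝ fun t => k t s i)
    (hsys1 : ∀ (t : ℝ) (s : ZMod N) (i : Fin n), ∀ hi : (i : ℕ) + 1 ≤ n - 1,
      deriv (fun τ => k τ s i) t
        = k t (s + 1) ⟨(i : ℕ) + 1, by omega⟩ / k t (s + 1) ⟨0, by omega⟩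
          - k t s ⟨(i : ℕ) + 1, by omega⟩ /
              k t (s - (((i : ℕ) + 1 : ℕ) : ZMod N)) ⟨0, by omega⟩)
    (t : ℝ) (s : ZMod N) :
    HasDerivAt (fun τ => k τ s ⟨0, h0⟩)
      (k t (s + 1) ⟨1, h1⟩ / k t (s + 1) ⟨0, h0⟩
        - k t s ⟨1, h1⟩ / k t (s - 1) ⟨0, h0⟩) t := by
  have h := ((hdiff s ⟨0, h0⟩) t).hasDerivAt
  rw [hsys1 t s ⟨0, h0⟩ (show 0 + 1 ≤ n - 1 by omega)] at h
  simpa using h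

lemma prodshift (k : ℝ → ZMod N → Fin n → ℝ) (h0 : 0 < n) (t : ℝ) (s : ZMod N) (m : ℕ) :
    ∏ j ∈ Finset.range (m + 1), k t (s - 1 + (j : ZMod N)) ⟨0, h0⟩
      = k t (s - 1) ⟨0, h0⟩ * ∏ j ∈ Finset.range m, k t (s + (j : ZMod N)) ⟨0, h0⟩ := by
  rw [Finset.prod_range_succ']
  rw [mul_comm]
  congr 1
  · simp
  · refine Finset.prod_congr rfl fun j _ => ?_
    congr 1
    push_cast
    ring

lemma prodne (k : ℝ → ZMod N → Fin n → ℝ) (h0 : 0 < n)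
    (hne : ∀ (t : ℝ) (s : ZMod N), k t s ⟨0, h0⟩ ≠ 0)
    (t : ℝ) (s : ZMod N) (m : ℕ) :
    (∏ j ∈ Finset.range m, k t (s + (j : ZMod N)) ⟨0, h0⟩) ≠ 0 :=
  Finset.prod_ne_zero_iff.mpr fun j _ => hne t _

lemma prodderiv (k : ℝ → ZMod N → Fin n → ℝ) (h0 : 0 < n) (h1 : 1 < n) (hn : 2 ≤ n)
    (hdiff : ∀ (s : ZMod N) (i : Fin n), Differentiable ℝ fun t => k t s i)
    (hne : ∀ (t : ℝ) (s : ZMod N), k t s ⟨0, h0⟩ ≠ 0)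
    (hsys1 : ∀ (t : ℝ) (s : ZMod N) (i : Fin n), ∀ hi : (i : ℕ) + 1 ≤ n - 1,
      deriv (fun τ => k τ s i) t
        = k t (s + 1) ⟨(i : ℕ) + 1, by omega⟩ / k t (s + 1) ⟨0, by omega⟩
          - k t s ⟨(i : ℕ) + 1, by omega⟩ /
              k t (s - (((i : ℕ) + 1 : ℕ) : ZMod N)) ⟨0, by omega⟩)
    (t : ℝ) (m : ℕ) (hm : 1 ≤ m) : ∀ s : ZMod N,
    HasDerivAt (fun τ => ∏ j ∈ Finset.range m, k τ (s + (j : ZMod N)) ⟨0, h0⟩)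
      ((∏ j ∈ Finset.range m, k t (s + (j : ZMod N)) ⟨0, h0⟩) *
        (Vm k h0 h1 t (s + ((m - 1 : ℕ) : ZMod N)) - Vm k h0 h1 t (s - 1))) t := by
  induction m, hm using Nat.le_induction with
  | base =>
    intro s
    simp only [Finset.prod_range_one, Nat.cast_zero, add_zero, Nat.sub_self]
    have h := kderiv k h0 h1 hn hdiff hsys1 t s
    convert h using 1
    simp only [Vm]
    have h1 := hne t s
    have h2 := hne t (s + 1)
    have h3 := hne t (s - 1)
    field_simp
    ring_nf
    field_simp
  | succ m hm ih =>
    intro s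
    simp only [Finset.prod_range_succ]
    have h := (ih s).fun_mul (kderiv k h0 h1 hn hdiff hsys1 t (s + (m : ZMod N)))
    refine h.congr_deriv ?_
    have e1 : s + ((m - 1 : ℕ) : ZMod N) = s + (m : ZMod N) - 1 := by
      rw [Nat.cast_sub hm]; push_cast; ring
    have e2 : s + ((m + 1 - 1 : ℕ) : ZMod N) = s + (m : ZMod N) := by
      simp
    have e3 : s + (m : ZMod N) - 1 + 1 = s + (m : ZMod N) := by ring
    simp only [Vm, e1, e2, e3]
    have h1 := hne t (s + (m : ZMod N))
    have h2 := hne t (s + (m : ZMod N) + 1)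
    have h3 := hne t (s + (m : ZMod N) - 1)
    have h4 := hne t (s - 1)
    have h5 := hne t s
    field_simp
    ring

lemma miuraU_zero (k : ℝ → ZMod N → Fin n → ℝ) (h0 : 0 < n) (t : ℝ) (s : ZMod N) :
    MiuraU k t s ⟨0, h0⟩
      = (∏ j ∈ Finset.range (n + 1), k t (s + (j : ZMod N)) ⟨0, h0⟩)⁻¹ := by
  simp [MiuraU]

lemma miuraU_pos (k : ℝ → ZMod N → Fin n → ℝ) (h0 : 0 < n) (t : ℝ) (s : ZMod N)
    (i : Fin n) (hi : 1 ≤ (i : ℕ)) :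
    MiuraU k t s i
      = k t (s + ((i : ℕ) : ZMod N)) i /
          ∏ j ∈ Finset.range ((i : ℕ) + 1), k t (s + (j : ZMod N)) ⟨0, h0⟩ := by
  rw [MiuraU, if_neg (by omega)]

lemma miuraU_one (k : ℝ → ZMod N → Fin n → ℝ) (h0 : 0 < n) (h1 : 1 < n)
    (t : ℝ) (s : ZMod N) :
    MiuraU k t s ⟨1, h1⟩ = Vm k h0 h1 t s := by
  rw [miuraU_pos k h0 t s ⟨1, h1⟩ (by simp)]
  simp [Vm, Finset.prod_range_succ]

end aux

/-- if `k` solves the lattice system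
`(d/dt)k^i_s = k^{i+1}_{s+1}/k^1_{s+1} − k^{i+1}_s/k^1_{s−i}` (`i = 1,…,n−1`),
`(d/dt)k^n_s = 1/k^1_{s+1} − 1/k^1_{s−n}`, then the Miura-transformed variables `u`
solve `(d/dt)u^1_s = −u^1_s (u^2_{s+n} − u^2_{s−1})`,
`(d/dt)u^i_s = u^{i+1}_s − u^{i+1}_{s−1} − u^i_s (u^2_{s+i−1} − u^2_{s−1})`
(`i = 2,…,n−1`), and
`(d/dt)u^n_s = u^1_s − u^1_{s−1} − u^n_s (u^2_{s+n−1} − u^2_{s−1})`. -/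
theorem stmt_12 {n N : ℕ} [NeZero N] (hn : 2 ≤ n)
    (k : ℝ → ZMod N → Fin n → ℝ)
    (hdiff : ∀ (s : ZMod N) (i : Fin n), Differentiable ℝ fun t => k t s i)
    (hne : ∀ (t : ℝ) (s : ZMod N), k t s ⟨0, by omega⟩ ≠ 0)
    (hsys1 : ∀ (t : ℝ) (s : ZMod N) (i : Fin n), ∀ hi : (i : ℕ) + 1 ≤ n - 1,
      deriv (fun τ => k τ s i) t
        = k t (s + 1) ⟨(i : ℕ) + 1, by omega⟩ / k t (s + 1) ⟨0, by omega⟩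
          - k t s ⟨(i : ℕ) + 1, by omega⟩ /
              k t (s - (((i : ℕ) + 1 : ℕ) : ZMod N)) ⟨0, by omega⟩)
    (hsys2 : ∀ (t : ℝ) (s : ZMod N),
      deriv (fun τ => k τ s ⟨n - 1, by omega⟩) t
        = 1 / k t (s + 1) ⟨0, by omega⟩
          - 1 / k t (s - ((n : ℕ) : ZMod N)) ⟨0, by omega⟩) :
    ∀ (t : ℝ) (s : ZMod N),
      (deriv (fun τ => MiuraU k τ s ⟨0, by omega⟩) t
        = -(MiuraU k t s ⟨0, by omega⟩) *
            (MiuraU k t (s + ((n : ℕ) : ZMod N)) ⟨1, by omega⟩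
              - MiuraU k t (s - 1) ⟨1, by omega⟩)) ∧
      (∀ i : Fin n, 1 ≤ (i : ℕ) → ∀ hi : (i : ℕ) + 1 ≤ n - 1,
        deriv (fun τ => MiuraU k τ s i) t
          = MiuraU k t s ⟨(i : ℕ) + 1, by omega⟩
            - MiuraU k t (s - 1) ⟨(i : ℕ) + 1, by omega⟩
            - MiuraU k t s i *
              (MiuraU k t (s + ((i : ℕ) : ZMod N)) ⟨1, by omega⟩
                - MiuraU k t (s - 1) ⟨1, by omega⟩)) ∧
      (deriv (fun τ => MiuraU k τ s ⟨n - 1, by omega⟩) t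
        = MiuraU k t s ⟨0, by omega⟩ - MiuraU k t (s - 1) ⟨0, by omega⟩
          - MiuraU k t s ⟨n - 1, by omega⟩ *
            (MiuraU k t (s + ((n - 1 : ℕ) : ZMod N)) ⟨1, by omega⟩
              - MiuraU k t (s - 1) ⟨1, by omega⟩)) := by
  have h0 : 0 < n := by omega
  have h1 : 1 < n := by omega
  have hne' : ∀ (t : ℝ) (s : ZMod N), k t s ⟨0, h0⟩ ≠ 0 := hne
  intro t s
  refine ⟨?_, ?_, ?_⟩
  · -- part (a)
    have hP := prodderiv k h0 h1 hn hdiff hne' hsys1 t (n + 1) (by omega) s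
    have hd := hP.fun_inv (prodne k h0 hne' t s (n + 1))
    have heq : (fun τ => MiuraU k τ s ⟨0, h0⟩)
        = fun τ => (∏ j ∈ Finset.range (n + 1), k τ (s + (j : ZMod N)) ⟨0, h0⟩)⁻¹ :=
      funext fun τ => miuraU_zero k h0 τ s
    rw [heq, hd.deriv, miuraU_zero k h0 t s,
      miuraU_one k h0 h1 t (s + ((n : ℕ) : ZMod N)), miuraU_one k h0 h1 t (s - 1)]
    have e2 : (n + 1 - 1 : ℕ) = n := by omega
    rw [e2]
    have hPn := prodne k h0 hne' t s (n + 1)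
    field_simp
  · -- part (b)
    intro i hi1 hi
    have hnum := ((hdiff (s + (((i : ℕ) : ℕ) : ZMod N)) i) t).hasDerivAt
    rw [hsys1 t (s + (((i : ℕ) : ℕ) : ZMod N)) i hi] at hnum
    have hden := prodderiv k h0 h1 hn hdiff hne' hsys1 t ((i : ℕ) + 1) (by omega) s
    simp only [Nat.add_sub_cancel] at hden
    have hdne := prodne k h0 hne' t s ((i : ℕ) + 1)
    have hd := hnum.fun_div hden hdne
    have heq : (fun τ => MiuraU k τ s i)
        = fun τ => k τ (s + (((i : ℕ) : ℕ) : ZMod N)) i /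
            ∏ j ∈ Finset.range ((i : ℕ) + 1), k τ (s + (j : ZMod N)) ⟨0, h0⟩ :=
      funext fun τ => miuraU_pos k h0 τ s i hi1
    rw [heq, hd.deriv,
      miuraU_pos k h0 t s ⟨(i : ℕ) + 1, by omega⟩ (by simp),
      miuraU_pos k h0 t (s - 1) ⟨(i : ℕ) + 1, by omega⟩ (by simp),
      miuraU_pos k h0 t s i hi1,
      miuraU_one k h0 h1 t (s + ((i : ℕ) : ZMod N)), miuraU_one k h0 h1 t (s - 1)]
    simp only [Fin.val_mk, Finset.prod_range_succ, prodshift k h0 t s ((i : ℕ) + 1)]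
    have eA : s + ((i : ℕ) : ZMod N) - (((i : ℕ) + 1 : ℕ) : ZMod N) = s - 1 := by
      push_cast; ring
    have eB : s - 1 + (((i : ℕ) + 1 : ℕ) : ZMod N) = s + ((i : ℕ) : ZMod N) := by
      push_cast; ring
    have eC : s + (((i : ℕ) + 1 : ℕ) : ZMod N) = s + ((i : ℕ) : ZMod N) + 1 := by
      push_cast; ring
    rw [eA, eB, eC] at *
    have h2 := hne' t (s + ((i : ℕ) : ZMod N) + 1)
    have h3 := hne' t (s - 1)
    have h4 := prodne k h0 hne' t s (i : ℕ)
    have h5 := hne' t (s + ((i : ℕ) : ZMod N))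
    field_simp
  · -- part (c)
    have en1 : (1:ℕ) ≤ n - 1 := by omega
    have hnum := ((hdiff (s + ((n - 1 : ℕ) : ZMod N)) ⟨n - 1, by omega⟩) t).hasDerivAt
    rw [hsys2 t (s + ((n - 1 : ℕ) : ZMod N))] at hnum
    have hden := prodderiv k h0 h1 hn hdiff hne' hsys1 t n (by omega) s
    have hdne := prodne k h0 hne' t s n
    have hd := hnum.fun_div hden hdne
    have en : (n - 1) + 1 = n := by omega
    have heq : (fun τ => MiuraU k τ s ⟨n - 1, by omega⟩)
        = fun τ => k τ (s + ((n - 1 : ℕ) : ZMod N)) ⟨n - 1, by omega⟩ /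
            ∏ j ∈ Finset.range n, k τ (s + (j : ZMod N)) ⟨0, h0⟩ := by
      funext τ
      rw [miuraU_pos k h0 τ s ⟨n - 1, by omega⟩ (show (1:ℕ) ≤ n - 1 by omega)]
      simp only [Fin.val_mk, en]
    rw [heq, hd.deriv, miuraU_zero k h0 t s, miuraU_zero k h0 t (s - 1),
      miuraU_pos k h0 t s ⟨n - 1, by omega⟩ (show (1:ℕ) ≤ n - 1 by omega),
      miuraU_one k h0 h1 t (s + ((n - 1 : ℕ) : ZMod N)), miuraU_one k h0 h1 t (s - 1)]
    simp only [Fin.val_mk, en]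
    rw [prodshift k h0 t s n, Finset.prod_range_succ]
    have eA : s + ((n - 1 : ℕ) : ZMod N) - ((n : ℕ) : ZMod N) = s - 1 := by
      rw [Nat.cast_sub (by omega : 1 ≤ n)]; push_cast; ring
    have eC : s + ((n - 1 : ℕ) : ZMod N) + 1 = s + ((n : ℕ) : ZMod N) := by
      rw [Nat.cast_sub (by omega : 1 ≤ n)]; push_cast; ring
    rw [eA, eC]
    have h2 := hne' t (s + ((n : ℕ) : ZMod N))
    have h3 := hne' t (s - 1)
    have h4 := prodne k h0 hne' t s n
    field_simp
end

section
/- Let N ≥ 1 and λ ∈ ℝ. Suppose a, b : ℝ → ZMod N → ℝ are differentiable in t with b_s(t) ≠ 0 for all s and t, and satisfy (d/dt)a_s = 1/b_{s+1} − 1/b_{s−2} and (d/dt)b_s = λ( a_{s+1}/b_{s+1} − a_s/b_{s−1} ). Define u_s = 1/(b_s b_{s+1} b_{s+2}) and v_s = −a_{s+1}/(b_s b_{s+1}). Then (d/dt)u_s = λ u_s (v_{s+2} − v_{s−1}) and (d/dt)v_s = u_{s−1} − u_s + λ v_s (v_{s+1} − v_{s−1}) (the Boussinesq lattice related to the lattice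 W_3-algebra, for λ = 1). -/
private lemma stmt13_key1 (lam a0 a1 a2 a3 b0 b1 b2 b3 bm : ℝ) (h0 : b0 ≠ 0) (h1 : b1 ≠ 0)
    (h2 : b2 ≠ 0) (h3 : b3 ≠ 0) (hm : bm ≠ 0) :
    (0 * (b0 * b1 * b2) -
        1 * ((lam * (a1 / b1 - a0 / bm) * b1 + b0 * (lam * (a2 / b2 - a1 / b0))) * b2 +
            b0 * b1 * (lam * (a3 / b3 - a2 / b1)))) / (b0 * b1 * b2) ^ 2
      = lam * (1 / (b0 * b1 * b2)) * (-a3 / (b2 * b3) - -a0 / (bm * b0)) := by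
  field_simp
  ring

private lemma stmt13_key2 (lam a0 a1 a2 b0 b1 b2 bm : ℝ) (h0 : b0 ≠ 0) (h1 : b1 ≠ 0)
    (h2 : b2 ≠ 0) (hm : bm ≠ 0) :
    (-(1 / b2 - 1 / bm) * (b0 * b1) -
        -a1 * (lam * (a1 / b1 - a0 / bm) * b1 + b0 * (lam * (a2 / b2 - a1 / b0)))) /
      (b0 * b1) ^ 2
      = 1 / (bm * b0 * b1) - 1 / (b0 * b1 * b2)
        + lam * (-a1 / (b0 * b1)) * (-a2 / (b1 * b2) - -a0 / (bm * b0)) := by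
  field_simp
  ring

/-- if `(a,b)` solves `a_t = 1/b_1 − 1/b_{−2}`,
`b_t = λ(a_1/b_1 − a/b_{−1})`, then `u_s = 1/(b_s b_{s+1} b_{s+2})` and
`v_s = −a_{s+1}/(b_s b_{s+1})` solve the Boussinesq lattice
`u_t = λ u (v_2 − v_{−1})`, `v_t = u_{−1} − u + λ v (v_1 − v_{−1})`. -/
theorem stmt_13 {N : ℕ} (hN : 1 ≤ N) (lam : ℝ) (a b : ℝ → ZMod N → ℝ)
    (ha : ∀ s : ZMod N, Differentiable ℝ fun t => a t s)
    (hb : ∀ s : ZMod N, Differentiable ℝ fun t => b t s)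
    (hbne : ∀ (t : ℝ) (s : ZMod N), b t s ≠ 0)
    (hsysa : ∀ (t : ℝ) (s : ZMod N),
      deriv (fun τ => a τ s) t = 1 / b t (s + 1) - 1 / b t (s - 2))
    (hsysb : ∀ (t : ℝ) (s : ZMod N),
      deriv (fun τ => b τ s) t
        = lam * (a t (s + 1) / b t (s + 1) - a t s / b t (s - 1))) :
    ∀ (t : ℝ) (s : ZMod N),
      (deriv (fun τ => 1 / (b τ s * b τ (s + 1) * b τ (s + 2))) t
        = lam * (1 / (b t s * b t (s + 1) * b t (s + 2))) *
            ((-(a t (s + 3)) / (b t (s + 2) * b t (s + 3)))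
              - (-(a t s) / (b t (s - 1) * b t s)))) ∧
      (deriv (fun τ => -(a τ (s + 1)) / (b τ s * b τ (s + 1))) t
        = 1 / (b t (s - 1) * b t s * b t (s + 1))
          - 1 / (b t s * b t (s + 1) * b t (s + 2))
          + lam * (-(a t (s + 1)) / (b t s * b t (s + 1))) *
              ((-(a t (s + 2)) / (b t (s + 1) * b t (s + 2)))
                - (-(a t s) / (b t (s - 1) * b t s)))) := by
  intro t s
  have e1 : s + 1 + 1 = s + 2 := by ring
  have e2 : s + 2 + 1 = s + 3 := by ring
  have e3 : s + 1 - 1 = s := by ring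
  have e4 : s + 2 - 1 = s + 1 := by ring
  have e5 : s + 1 - 2 = s - 1 := by ring
  have Hb : ∀ r : ZMod N, HasDerivAt (fun τ => b τ r)
      (lam * (a t (r + 1) / b t (r + 1) - a t r / b t (r - 1))) t := by
    intro r
    have h := ((hb r) t).hasDerivAt
    rwa [hsysb t r] at h
  have Ha : ∀ r : ZMod N, HasDerivAt (fun τ => a τ r)
      (1 / b t (r + 1) - 1 / b t (r - 2)) t := by
    intro r
    have h := ((ha r) t).hasDerivAt
    rwa [hsysa t r] at h
  have hne : b t s * b t (s + 1) * b t (s + 2) ≠ 0 :=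
    mul_ne_zero (mul_ne_zero (hbne t s) (hbne t (s + 1))) (hbne t (s + 2))
  constructor
  · have h := (hasDerivAt_const t (1 : ℝ)).div (((Hb s).mul (Hb (s + 1))).mul (Hb (s + 2))) hne
    erw [h.deriv]
    simp only [e1, e2, e3, e4]
    exact stmt13_key1 lam (a t s) (a t (s + 1)) (a t (s + 2)) (a t (s + 3))
      (b t s) (b t (s + 1)) (b t (s + 2)) (b t (s + 3)) (b t (s - 1))
      (hbne t s) (hbne t (s + 1)) (hbne t (s + 2)) (hbne t (s + 3)) (hbne t (s - 1))
  · have h := ((Ha (s + 1)).neg).div ((Hb s).mul (Hb (s + 1)))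
      (mul_ne_zero (hbne t s) (hbne t (s + 1)))
    erw [h.deriv]
    simp only [e1, e2, e3, e4, e5]
    exact stmt13_key2 lam (a t s) (a t (s + 1)) (a t (s + 2))
      (b t s) (b t (s + 1)) (b t (s + 2)) (b t (s - 1))
      (hbne t s) (hbne t (s + 1)) (hbne t (s + 2)) (hbne t (s - 1))
end

section
/- Let N ≥ 1. Suppose b : ℝ → ZMod N → ℝ is differentiable in t with b_s(t) ≠ 0 for all s and t, and satisfies (d/dt)b_s = 1/(b_{s−1} b_{s−2}) − 1/(b_{s+1} b_{s+2}). Then u_s = 1/(b_s b_{s+1} b_{s+2}) satisfies the Narita–Itoh–Bogoyavlensky lattice with p = 2: (d/dt)u_s = u_s ( u_{s+1} + u_{s+2} − u_{s−1} − u_{s−2} ). -/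
/-- if `b` solves `b_t = 1/(b_{−1}b_{−2}) − 1/(b_1 b_2)`, then
`u_s = 1/(b_s b_{s+1} b_{s+2})` solves the Narita–Itoh–Bogoyavlensky lattice
with `p = 2`: `u_t = u (u_1 + u_2 − u_{−1} − u_{−2})`. -/
theorem stmt_14 {N : ℕ} (hN : 1 ≤ N) (b : ℝ → ZMod N → ℝ)
    (hb : ∀ s : ZMod N, Differentiable ℝ fun t => b t s)
    (hbne : ∀ (t : ℝ) (s : ZMod N), b t s ≠ 0)
    (hsys : ∀ (t : ℝ) (s : ZMod N),
      deriv (fun τ => b τ s) t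
        = 1 / (b t (s - 1) * b t (s - 2)) - 1 / (b t (s + 1) * b t (s + 2))) :
    ∀ (t : ℝ) (s : ZMod N),
      deriv (fun τ => 1 / (b τ s * b τ (s + 1) * b τ (s + 2))) t
        = (1 / (b t s * b t (s + 1) * b t (s + 2))) *
            (1 / (b t (s + 1) * b t (s + 2) * b t (s + 3))
              + 1 / (b t (s + 2) * b t (s + 3) * b t (s + 4))
              - 1 / (b t (s - 1) * b t s * b t (s + 1))
              - 1 / (b t (s - 2) * b t (s - 1) * b t s)) := by
  intro t s
  have H0 : HasDerivAt (fun τ => b τ s) (deriv (fun τ => b τ s) t) t :=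
    ((hb s) t).hasDerivAt
  have H1 : HasDerivAt (fun τ => b τ (s + 1)) (deriv (fun τ => b τ (s + 1)) t) t :=
    ((hb (s + 1)) t).hasDerivAt
  have H2 : HasDerivAt (fun τ => b τ (s + 2)) (deriv (fun τ => b τ (s + 2)) t) t :=
    ((hb (s + 2)) t).hasDerivAt
  have Hf : HasDerivAt (fun τ => b τ s * b τ (s + 1) * b τ (s + 2))
      ((deriv (fun τ => b τ s) t * b t (s + 1) + b t s * deriv (fun τ => b τ (s + 1)) t)
        * b t (s + 2)
        + b t s * b t (s + 1) * deriv (fun τ => b τ (s + 2)) t) t :=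
    (H0.mul H1).mul H2
  have hfne : b t s * b t (s + 1) * b t (s + 2) ≠ 0 :=
    mul_ne_zero (mul_ne_zero (hbne t s) (hbne t (s + 1))) (hbne t (s + 2))
  have Hinv := Hf.inv hfne
  have hd : deriv (fun τ => 1 / (b τ s * b τ (s + 1) * b τ (s + 2))) t
      = -((deriv (fun τ => b τ s) t * b t (s + 1) + b t s * deriv (fun τ => b τ (s + 1)) t)
          * b t (s + 2)
          + b t s * b t (s + 1) * deriv (fun τ => b τ (s + 2)) t)
        / (b t s * b t (s + 1) * b t (s + 2)) ^ 2 := by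
    simp only [one_div]
    exact Hinv.deriv
  rw [hd, hsys t s, hsys t (s + 1), hsys t (s + 2)]
  have e1 : s + 1 - 1 = s := by ring
  have e2 : s + 1 - 2 = s - 1 := by ring
  have e3 : s + 1 + 1 = s + 2 := by ring
  have e4 : s + 1 + 2 = s + 3 := by ring
  have e5 : s + 2 - 1 = s + 1 := by ring
  have e6 : s + 2 - 2 = s := by ring
  have e7 : s + 2 + 1 = s + 3 := by ring
  have e8 : s + 2 + 2 = s + 4 := by ring
  rw [e1, e2, e3, e4, e5, e6, e7, e8]
  have h0 := hbne t s
  have h1 := hbne t (s + 1)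
  have h2 := hbne t (s + 2)
  have h3 := hbne t (s + 3)
  have h4 := hbne t (s + 4)
  have hm1 := hbne t (s - 1)
  have hm2 := hbne t (s - 2)
  field_simp
  ring
end

section
/- For all a, b : ZMod N → ℝ, setting ã = −b and b̃_s = −a_{s+1} (the Miura transformation induced by projective duality), the operator identities 𝒬₁(ã,b̃) = D ∘ 𝒫₁(a,b) ∘ D⋆ and 𝒬₂(ã,b̃) = D ∘ 𝒫₂(a,b) ∘ D⋆ hold, where D and its adjoint D⋆ act on pairs by D(θ,η) = (−η, −θ_1) and D⋆(θ,η) = (−η_{−1}, −θ); that is, both sides agree when applied to every pair (θ,η) of maps ZMod N → ℝ. -/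
/-- The operator `𝒫₁(a,b)` (it only involves `a`):
`𝒫₁(θ,η) = (η_1 − η_{−2}, θ_2 − θ_{−1} + λ(a_1η_1 − aη_{−1}))`. -/
noncomputable def P1 {N : ℕ} (lam : ℝ) (a : ZMod N → ℝ)
    (θ η : ZMod N → ℝ) : (ZMod N → ℝ) × (ZMod N → ℝ) :=
  (fun s => η (s + 1) - η (s - 2),
   fun s => θ (s + 2) - θ (s - 1)
     + lam * (a (s + 1) * η (s + 1) - a s * η (s - 1)))

/-- The operator `𝒫₂(a,b)`, where `R` is the inverse of `𝒯 + 1 + 𝒯⁻¹`. -/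
noncomputable def P2 {N : ℕ} (lam : ℝ) (R : (ZMod N → ℝ) → (ZMod N → ℝ))
    (a b : ZMod N → ℝ) (θ η : ZMod N → ℝ) : (ZMod N → ℝ) × (ZMod N → ℝ) :=
  (fun s => b (s - 1) * θ (s - 1) - b s * θ (s + 1)
     + lam * a s * (R (fun r => a r * θ r) (s + 1) - R (fun r => a r * θ r) (s - 1))
     + lam * a s * (R (fun r => b r * η r) s - R (fun r => b r * η r) (s - 1)),
   fun s => -(lam * b s * (R (fun r => a r * θ r) s - R (fun r => a r * θ r) (s + 1)))
     + lam * b s * (R (fun r => b r * η r) (s + 1) - R (fun r => b r * η r) (s - 1)))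

/-- The operator `𝒬₁(ã,b̃)`:
`𝒬₁(θ,η) = ( λ(b̃_{−1}θ_{−1} − b̃θ_1) + η_1 − η_{−2}, θ_2 − θ_{−1} )`. -/
noncomputable def Q1 {N : ℕ} (lam : ℝ) (ta tb : ZMod N → ℝ)
    (θ η : ZMod N → ℝ) : (ZMod N → ℝ) × (ZMod N → ℝ) :=
  (fun s => lam * (tb (s - 1) * θ (s - 1) - tb s * θ (s + 1))
     + η (s + 1) - η (s - 2),
   fun s => θ (s + 2) - θ (s - 1))

/-- The operator `𝒬₂(ã,b̃)`:
`𝒬₂(θ,η) = ( λã((𝒯−𝒯⁻¹)R(ãθ)) + λã((1−𝒯⁻¹)R(b̃η)),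
−λb̃((1−𝒯)R(ãθ)) + ã_1η_1 − ãη_{−1} + λb̃((𝒯−𝒯⁻¹)R(b̃η)) )`. -/
noncomputable def Q2 {N : ℕ} (lam : ℝ) (R : (ZMod N → ℝ) → (ZMod N → ℝ))
    (ta tb : ZMod N → ℝ) (θ η : ZMod N → ℝ) : (ZMod N → ℝ) × (ZMod N → ℝ) :=
  (fun s => lam * ta s *
       (R (fun r => ta r * θ r) (s + 1) - R (fun r => ta r * θ r) (s - 1))
     + lam * ta s * (R (fun r => tb r * η r) s - R (fun r => tb r * η r) (s - 1)),
   fun s => -(lam * tb s *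
       (R (fun r => ta r * θ r) s - R (fun r => ta r * θ r) (s + 1)))
     + ta (s + 1) * η (s + 1) - ta s * η (s - 1)
     + lam * tb s *
       (R (fun r => tb r * η r) (s + 1) - R (fun r => tb r * η r) (s - 1)))

/-- under the Miura transformation `ã = −b`, `b̃_s = −a_{s+1}`
(induced by projective duality) one has `𝒬ᵢ(ã,b̃) = D ∘ 𝒫ᵢ(a,b) ∘ D⋆`, where
`D(θ,η) = (−η, −θ_1)` and `D⋆(θ,η) = (−η_{−1}, −θ)`. -/
theorem stmt_16 {N : ℕ} [NeZero N] (hN3 : ¬ (3 ∣ N)) (lam : ℝ)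
    (R : (ZMod N → ℝ) → (ZMod N → ℝ))
    (hR1 : ∀ (x : ZMod N → ℝ) (s : ZMod N),
      R x (s + 1) + R x s + R x (s - 1) = x s)
    (hR2 : ∀ (x : ZMod N → ℝ) (s : ZMod N),
      R (fun r => x (r + 1) + x r + x (r - 1)) s = x s)
    (a b : ZMod N → ℝ) :
    ∀ θ η : ZMod N → ℝ,
      (Q1 lam (fun s => -(b s)) (fun s => -(a (s + 1))) θ η
        = ((fun s => -((P1 lam a (fun r => -(η (r - 1))) (fun r => -(θ r))).2 s)),
           (fun s => -((P1 lam a (fun r => -(η (r - 1))) (fun r => -(θ r))).1 (s + 1))))) ∧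
      (Q2 lam R (fun s => -(b s)) (fun s => -(a (s + 1))) θ η
        = ((fun s => -((P2 lam R a b (fun r => -(η (r - 1))) (fun r => -(θ r))).2 s)),
           (fun s => -((P2 lam R a b (fun r => -(η (r - 1))) (fun r => -(θ r))).1 (s + 1))))) := by
  -- R commutes with the backward shift
  have hshift : ∀ (x : ZMod N → ℝ) (s : ZMod N),
      R (fun r => x (r - 1)) s = R x (s - 1) := by
    intro x s
    have h := hR2 (fun u => R x (u - 1)) s
    have hfun : (fun r => R x (r + 1 - 1) + R x (r - 1) + R x (r - 1 - 1))
        = (fun r => x (r - 1)) := by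
      funext r
      have h1 : r + 1 - 1 = r := by ring
      have h2 : r - 1 - 1 = r - 1 - 1 := rfl
      rw [h1]
      have := hR1 x (r - 1)
      have h3 : r - 1 + 1 = r := by ring
      rw [h3] at this
      linarith [this]
    rw [hfun] at h
    exact h
  intro θ η
  -- canonical rewrites of R-arguments
  have hA : (fun r => b r * -(θ r)) = (fun r => -(b r) * θ r) := by
    funext r; ring
  have hC : ∀ s : ZMod N, R (fun r => a r * -(η (r - 1))) s
      = R (fun r => -(a (r + 1)) * η r) (s - 1) := by
    intro s
    have h := hshift (fun r => -(a (r + 1)) * η r) s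
    have hfun : (fun r => -(a (r - 1 + 1)) * η (r - 1))
        = (fun r => a r * -(η (r - 1))) := by
      funext r
      have h1 : r - 1 + 1 = r := by ring
      rw [h1]; ring
    rw [hfun] at h
    exact h
  have e1 : ∀ s : ZMod N, s - 1 + 1 = s := fun s => by ring
  have e2 : ∀ s : ZMod N, s + 2 - 1 = s + 1 := fun s => by ring
  have e3 : ∀ s : ZMod N, s - 1 - 1 = s - 2 := fun s => by ring
  have e4 : ∀ s : ZMod N, s + 1 + 1 = s + 2 := fun s => by ring
  have e5 : ∀ s : ZMod N, s + 1 - 2 = s - 1 := fun s => by ring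
  have e6 : ∀ s : ZMod N, s + 1 - 1 = s := fun s => by ring
  have e7 : ∀ s : ZMod N, s + 1 + 1 = s + 2 := fun s => by ring
  constructor
  · simp only [Q1, P1, Prod.mk.injEq]
    constructor <;> funext s <;> simp only [e1, e2, e3, e4, e5, e6, e7] <;> ring
  · simp only [Q2, P2, Prod.mk.injEq, hA, hC]
    constructor <;> funext s <;>
      simp only [e1, e2, e3, e4, e5, e6, e7, hC] <;> ring
end

section
/- Let a, b : ZMod N → ℝ with b_s ≠ 0 for all s. Let θ_s = −1/(b_{s−1} b_s) and η_s = a_{s+1}/(b_s^2 b_{s+1}) + a_s/(b_{s−1} b_s^2) (the gradient of the functional g = −Σ_s a_{s+1}/(b_s b_{s+1})). Then 𝒫₁(a,b)(0, 1/b) = 𝒫₂(a,b)(θ, η), and both sides equal the pair whose first component at s is 1/b_{s+1} − 1/b_{s−2} and whose second component at s is λ( a_{s+1}/b_{s+1} − a_s/b_{s−1} ); i.e., the lattice flow a_t = 1/b_1 − 1/b_{−2}, b_t = λ(a_1/b_1 − a/b_{−1}) is biHamiltonian with Hamiltonians Σ_s ln b_s (for 𝒫₁) and g (for 𝒫₂).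 -/
/-- the lattice flow `a_t = 1/b_1 − 1/b_{−2}`,
`b_t = λ(a_1/b_1 − a/b_{−1})` is biHamiltonian: applying `𝒫₁` to the gradient
`(0, 1/b)` of `Σ_s ln b_s` and `𝒫₂` to the gradient `(θ, η)` of
`g = −Σ_s a_{s+1}/(b_s b_{s+1})` gives the same vector field, the flow itself. -/
theorem stmt_17 {N : ℕ} [NeZero N] (hN3 : ¬ (3 ∣ N)) (lam : ℝ)
    (R : (ZMod N → ℝ) → (ZMod N → ℝ))
    (hR1 : ∀ (x : ZMod N → ℝ) (s : ZMod N),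
      R x (s + 1) + R x s + R x (s - 1) = x s)
    (hR2 : ∀ (x : ZMod N → ℝ) (s : ZMod N),
      R (fun r => x (r + 1) + x r + x (r - 1)) s = x s)
    (a b : ZMod N → ℝ) (hb : ∀ s, b s ≠ 0) :
    (P1 lam a (fun _ => 0) (fun s => 1 / b s)
      = P2 lam R a b (fun s => -(1 / (b (s - 1) * b s)))
          (fun s => a (s + 1) / ((b s) ^ 2 * b (s + 1))
            + a s / (b (s - 1) * (b s) ^ 2))) ∧
    (P1 lam a (fun _ => 0) (fun s => 1 / b s)
      = ((fun s => 1 / b (s + 1) - 1 / b (s - 2)),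
         (fun s => lam * (a (s + 1) / b (s + 1) - a s / b (s - 1))))) := by
  classical
  set c : ZMod N → ℝ := fun s => a (s+1) / (b s * b (s+1)) with hc
  set w : ZMod N → ℝ := R c with hwdef
  have hw : ∀ s, w (s+1) + w s + w (s-1) = c s := hR1 c
  have key1 : R (fun r => a r * (fun s => -(1 / (b (s - 1) * b s))) r)
      = fun s => -(w (s-1)) := by
    have hfun : (fun r => a r * (fun s => -(1 / (b (s - 1) * b s))) r)
        = (fun r => (fun t => -(w (t-1))) (r+1) + (fun t => -(w (t-1))) r
            + (fun t => -(w (t-1))) (r-1)) := by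
      funext r
      have h := hw (r-1)
      have e1 : r - 1 + 1 = r := by ring
      have e2 : r + 1 - 1 = r := by ring
      rw [e1] at h
      simp only [e2]
      have hcr1 : c (r-1) = a r / (b (r-1) * b r) := by
        simp only [hc]; rw [e1]
      rw [show a r * -(1 / (b (r - 1) * b r)) = -(a r / (b (r-1) * b r)) by ring,
        ← hcr1, ← h]
      ring
    rw [hfun]
    funext s
    exact hR2 (fun t => -(w (t-1))) s
  have key2 : R (fun r => b r * (fun s => a (s + 1) / ((b s) ^ 2 * b (s + 1))
        + a s / (b (s - 1) * (b s) ^ 2)) r)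
      = fun s => w s + w (s-1) := by
    have hfun : (fun r => b r * (fun s => a (s + 1) / ((b s) ^ 2 * b (s + 1))
          + a s / (b (s - 1) * (b s) ^ 2)) r)
        = (fun r => (fun t => w t + w (t-1)) (r+1) + (fun t => w t + w (t-1)) r
            + (fun t => w t + w (t-1)) (r-1)) := by
      funext r
      have h1 := hw r
      have h2 := hw (r-1)
      have e1 : r - 1 + 1 = r := by ring
      have e2 : r + 1 - 1 = r := by ring
      rw [e1] at h2
      simp only [e2]
      have hcr : c r = a (r+1) / (b r * b (r+1)) := rfl
      have hcr1 : c (r-1) = a (r-1+1) / (b (r-1) * b (r-1+1)) := rfl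
      rw [e1] at hcr1
      have hbr := hb r
      have hbr1 := hb (r+1)
      have hbm1 := hb (r-1)
      have : b r * (a (r + 1) / ((b r) ^ 2 * b (r + 1)) + a r / (b (r - 1) * (b r) ^ 2))
          = c r + c (r-1) := by
        rw [hcr, hcr1]; field_simp
      rw [this, ← h1, ← h2]
      ring
    rw [hfun]
    funext s
    exact hR2 (fun t => w t + w (t-1)) s
  have hflow : P1 lam a (fun _ => 0) (fun s => 1 / b s)
      = ((fun s => 1 / b (s + 1) - 1 / b (s - 2)),
         (fun s => lam * (a (s + 1) / b (s + 1) - a s / b (s - 1)))) := by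
    refine Prod.ext (funext fun s => ?_) (funext fun s => ?_)
    · rfl
    · show (0:ℝ) - 0 + lam * (a (s+1) * (1 / b (s+1)) - a s * (1 / b (s-1))) = _
      ring
  refine ⟨?_, hflow⟩
  rw [hflow]
  refine (Prod.ext (funext fun s => ?_) (funext fun s => ?_)).symm
  · show b (s-1) * -(1 / (b (s-1-1) * b (s-1))) - b s * -(1 / (b (s+1-1) * b (s+1)))
        + lam * a s * (R _ (s+1) - R _ (s-1)) + lam * a s * (R _ s - R _ (s-1))
        = 1 / b (s + 1) - 1 / b (s - 2)
    rw [key1, key2]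
    have e1 : s - 1 - 1 = s - 2 := by ring
    have e2 : s + 1 - 1 = s := by ring
    simp only [e1, e2]
    have hb1 := hb (s-1)
    have hb2 := hb (s-2)
    have hb3 := hb s
    have hb4 := hb (s+1)
    field_simp
    ring
  · show -(lam * b s * (R _ s - R _ (s+1))) + lam * b s * (R _ (s+1) - R _ (s-1))
        = lam * (a (s + 1) / b (s + 1) - a s / b (s - 1))
    rw [key1, key2]
    have e1 : s - 1 - 1 = s - 2 := by ring
    have e2 : s + 1 - 1 = s := by ring
    simp only [e1, e2]
    have h1 := hw s
    have h2 := hw (s-1)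
    have e3 : s - 1 + 1 = s := by ring
    rw [e3, e1] at h2
    have hcs : c s = a (s+1) / (b s * b (s+1)) := rfl
    have hcs1 : c (s-1) = a (s-1+1) / (b (s-1) * b (s-1+1)) := rfl
    rw [e3] at hcs1
    have hA : w (s+1) = c s - w s - w (s-1) := by linarith
    have hB : w (s-2) = c (s-1) - w s - w (s-1) := by linarith
    rw [hA, hB, hcs, hcs1]
    have hb1 := hb (s-1)
    have hb3 := hb s
    have hb4 := hb (s+1)
    field_simp
    ring
end

section
/- For all a, b : ZMod N → ℝ with b_s ≠ 0 for all s, the pair (0, 1/b) lies in the kernel of 𝒫₂: 𝒫₂(a,b)(0, 1/b) = (0, 0), where 1/b denotes the sequence s ↦ 1/b_s. In other words, the functional Σ_s ln b_s is a Casimir of the bracket defined by 𝒫₂. -/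
/-- the gradient `(0, 1/b)` of the functional `Σ_s ln b_s` lies in
the kernel of `𝒫₂`; i.e. `Σ_s ln b_s` is a Casimir of the bracket of `𝒫₂`. -/
theorem stmt_18 {N : ℕ} [NeZero N] (hN3 : ¬ (3 ∣ N)) (lam : ℝ)
    (R : (ZMod N → ℝ) → (ZMod N → ℝ))
    (hR1 : ∀ (x : ZMod N → ℝ) (s : ZMod N),
      R x (s + 1) + R x s + R x (s - 1) = x s)
    (hR2 : ∀ (x : ZMod N → ℝ) (s : ZMod N),
      R (fun r => x (r + 1) + x r + x (r - 1)) s = x s)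
    (a b : ZMod N → ℝ) (hb : ∀ s, b s ≠ 0) :
    P2 lam R a b (fun _ => 0) (fun s => 1 / b s)
      = ((fun _ => 0), (fun _ => 0)) := by
  have h0 : ∀ s : ZMod N, R (fun _ => (0:ℝ)) s = 0 := by
    intro s
    have := hR2 (fun _ => (0:ℝ)) s
    simpa using this
  have h1 : ∀ s : ZMod N, R (fun r => b r * (b r)⁻¹) s = 1/3 := by
    intro s
    have key : (fun r : ZMod N => b r * (b r)⁻¹)
        = fun r : ZMod N => (fun _ : ZMod N => ((1:ℝ)/3)) (r+1)
          + (fun _ : ZMod N => ((1:ℝ)/3)) r + (fun _ : ZMod N => ((1:ℝ)/3)) (r-1) := by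
      funext r
      rw [mul_inv_cancel₀ (hb r)]
      norm_num
    rw [key]
    exact hR2 (fun _ => ((1:ℝ)/3)) s
  unfold P2
  refine Prod.ext ?_ ?_ <;> funext s <;> simp [h0, h1]
end
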